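/- arXiv:math/9809176 — 5 statements merged into one kernel-verified Lean document; each statement's English description precedes it below -/
import Mathlib

section
/- (Fact F4.) Let r ≥ 1 and d ≥ max(2, r−1). Define bricks c_1, …, c_r ∈ Λ[r,d] by c_1 = W 1 and c_{k+1} = comb_k({c_k, W (k+1)}) for 1 ≤ k ≤ r−1. Then c_r is a minimal brick of Λ[r,d] whose envelope is the join of all r generators, and for each direction δ with 1 ≤ δ ≤ r−1 the δ-th coordinate of c_r differs from this envelope (indeed it is not a join of generators); hence c_r has exactly r−1 non-envelope coordinates. -/
open scoped Classical

noncomputable section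

/-- The free distributive lattice `L[r]` on `r` generators, realized as the
monotone Boolean functions of `r` Boolean variables other than the two constants. -/
structure FDL (r : ℕ) where
  f : (Fin r → Bool) → Bool
  mono : ∀ ⦃x y : Fin r → Bool⦄, (∀ i, x i ≤ y i) → f x ≤ f y
  map_bot : f (fun _ => false) = false
  map_top : f (fun _ => true) = true

namespace FDL

theorem ext' {r : ℕ} {a b : FDL r} (h : a.f = b.f) : a = b := by
  cases a; cases b; cases h; rfl

instance {r : ℕ} : PartialOrder (FDL r) where
  le a b := ∀ x, a.f x ≤ b.f x
  le_refl a x := le_refl _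
  le_trans a b c h1 h2 x := le_trans (h1 x) (h2 x)
  le_antisymm a b h1 h2 := ext' (funext fun x => le_antisymm (h1 x) (h2 x))

/-- The `n`-th generator of `L[r]`: the projection `x ↦ x n`. -/
def gen {r : ℕ} (n : Fin r) : FDL r where
  f x := x n
  mono := fun _ _ h => h n
  map_bot := rfl
  map_top := rfl

/-- Meet (pointwise AND) in `L[r]`. -/
def meet {r : ℕ} (a b : FDL r) : FDL r where
  f x := a.f x && b.f x
  mono := fun x y h => by
    show (a.f x && b.f x) ≤ (a.f y && b.f y)
    have ha := a.mono h
    have hb := b.mono h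
    revert ha hb
    cases a.f x <;> cases a.f y <;> cases b.f x <;> cases b.f y <;> decide
  map_bot := by
    show (a.f (fun _ => false) && b.f (fun _ => false)) = false
    rw [a.map_bot, b.map_bot]; rfl
  map_top := by
    show (a.f (fun _ => true) && b.f (fun _ => true)) = true
    rw [a.map_top, b.map_top]; rfl

/-- Join (pointwise OR) in `L[r]`. -/
def join {r : ℕ} (a b : FDL r) : FDL r where
  f x := a.f x || b.f x
  mono := fun x y h => by
    show (a.f x || b.f x) ≤ (a.f y || b.f y)
    have ha := a.mono h
    have hb := b.mono h
    revert ha hb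
    cases a.f x <;> cases a.f y <;> cases b.f x <;> cases b.f y <;> decide
  map_bot := by
    show (a.f (fun _ => false) || b.f (fun _ => false)) = false
    rw [a.map_bot, b.map_bot]; rfl
  map_top := by
    show (a.f (fun _ => true) || b.f (fun _ => true)) = true
    rw [a.map_top, b.map_top]; rfl

end FDL

/-- The `n`-th cube `W n` in `Λ[r,d]`: every coordinate is the `n`-th generator. -/
def cubeL (r d : ℕ) (n : Fin r) : Fin d → FDL r := fun _ => FDL.gen n

/-- `comb_δ(A)` in `Λ[r,d]`: the meet of the `δ`-th coordinates of the members of the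
nonempty finite set `A`, and the join of the `j`-th coordinates for `j ≠ δ`. -/
def combL {r d : ℕ} (δ : Fin d) (A : Finset (Fin d → FDL r)) (hA : A.Nonempty) :
    Fin d → FDL r := fun j =>
  if j = δ then
    { f := fun x => A.inf fun b => (b δ).f x
      mono := fun _ _ h => Finset.inf_mono_fun fun b _ => (b δ).mono h
      map_bot := (Finset.inf_congr rfl fun b _ => (b δ).map_bot).trans
        (Finset.inf_const hA false)
      map_top := (Finset.inf_congr rfl fun b _ => (b δ).map_top).trans
        (Finset.inf_const hA true) }
  else
    { f := fun x => A.sup fun b => (b j).f x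
      mono := fun _ _ h => Finset.sup_mono_fun fun b _ => (b j).mono h
      map_bot := (Finset.sup_congr rfl fun b _ => (b j).map_bot).trans
        (Finset.sup_const hA false)
      map_top := (Finset.sup_congr rfl fun b _ => (b j).map_top).trans
        (Finset.sup_const hA true) }

/-- `Ext_δ(Q) = { comb_δ(A) : A a nonempty finite subset of Q }` in `Λ[r,d]`. -/
def ExtL {r d : ℕ} (δ : Fin d) (Q : Set (Fin d → FDL r)) : Set (Fin d → FDL r) :=
  {b | ∃ (A : Finset (Fin d → FDL r)) (hA : A.Nonempty), ↑A ⊆ Q ∧ b = combL δ A hA}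

/-- `Ext_{1..d} = Ext_d ∘ ⋯ ∘ Ext_1`. -/
def ExtAllL {r d : ℕ} (Q : Set (Fin d → FDL r)) : Set (Fin d → FDL r) :=
  (List.finRange d).foldl (fun S δ => ExtL δ S) Q

/-- A brick of `Λ[r,d]` is good if it belongs to `Ext_{1..d}({W 1, …, W r})`. -/
def GoodL {r d : ℕ} (b : Fin d → FDL r) : Prop :=
  b ∈ ExtAllL (Set.range (cubeL r d))

/-- A brick of `Λ[r,d]` is minimal if it is good and no good brick is strictly
below it in the pointwise order. -/
def MinimalL {r d : ℕ} (b : Fin d → FDL r) : Prop :=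
  GoodL b ∧ ∀ c : Fin d → FDL r, GoodL c → c ≤ b → c = b

/-- `a ∈ L[r]` depends on the variable `n`. -/
def DependsL {r : ℕ} (a : FDL r) (n : Fin r) : Prop :=
  ∃ x : Fin r → Bool, a.f x ≠ a.f (Function.update x n (!x n))

/-- The alphabet of `a ∈ L[r]`: the set of variables on which it depends. -/
def alphabetL {r : ℕ} (a : FDL r) : Finset (Fin r) :=
  Finset.univ.filter fun n => DependsL a n

/-- The alphabet of a brick: the union of the alphabets of its coordinates. -/
def brickAlphabetL {r d : ℕ} (b : Fin d → FDL r) : Finset (Fin r) :=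
  Finset.univ.filter fun n => ∃ i, DependsL (b i) n

/-- The envelope of a brick `b`, as a Boolean function: the join of the generators
indexed by the alphabet of `b`. -/
def envFunL {r d : ℕ} (b : Fin d → FDL r) : (Fin r → Bool) → Bool :=
  fun x => (brickAlphabetL b).sup x

/-- A brick is balanced if all its coordinates have the same alphabet. -/
def BalancedL {r d : ℕ} (b : Fin d → FDL r) : Prop :=
  ∀ i j : Fin d, alphabetL (b i) = alphabetL (b j)

/-- The pairwise combine `comb_δ({a,b})`: meet in direction `δ`, join elsewhere. -/
def comb2 {r d : ℕ} (δ : Fin d) (a b : Fin d → FDL r) : Fin d → FDL r :=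
  fun j => if j = δ then FDL.meet (a j) (b j) else FDL.join (a j) (b j)

section Fact4Aux

open Finset

variable {r d : ℕ}

lemma bool_sup_eq_true_iff {α : Type*} (s : Finset α) (f : α → Bool) :
    s.sup f = true ↔ ∃ a ∈ s, f a = true := by
  constructor
  · intro h
    by_contra hc
    push_neg at hc
    have : s.sup f = ⊥ := (Finset.sup_eq_bot_iff _ _).2 (fun a ha => by
      have := hc a ha
      cases hfa : f a
      · rfl
      · exact absurd hfa this)
    rw [this] at h; exact Bool.noConfusion h
  · rintro ⟨a, ha, hfa⟩
    have : f a ≤ s.sup f := Finset.le_sup ha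
    rw [hfa] at this
    exact le_antisymm (by cases s.sup f <;> simp) this

lemma bool_inf_eq_false_iff {α : Type*} (s : Finset α) (f : α → Bool) :
    s.inf f = false ↔ ∃ a ∈ s, f a = false := by
  constructor
  · intro h
    by_contra hc
    push_neg at hc
    have : s.inf f = ⊤ := (Finset.inf_eq_top_iff _ _).2 (fun a ha => by
      have := hc a ha
      cases hfa : f a
      · exact absurd hfa this
      · rfl)
    rw [this] at h; exact Bool.noConfusion h
  · rintro ⟨a, ha, hfa⟩
    have : s.inf f ≤ f a := Finset.inf_le ha
    rw [hfa] at this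
    exact le_antisymm this (by cases s.inf f <;> simp)

lemma bool_inf_eq_true_iff {α : Type*} (s : Finset α) (f : α → Bool) :
    s.inf f = true ↔ ∀ a ∈ s, f a = true := Finset.inf_eq_top_iff _ _

lemma combL_f (δ : Fin d) (A : Finset (Fin d → FDL r)) (hA : A.Nonempty) (j : Fin d)
    (x : Fin r → Bool) :
    (combL δ A hA j).f x =
      if j = δ then A.inf (fun b => (b δ).f x) else A.sup (fun b => (b j).f x) := by
  unfold combL
  split <;> rfl

/-- The key invariant preserved by `comb`. -/
def BInv (b : Fin d → FDL r) : Prop :=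
  ∀ (T : Finset (Fin d)) (p : Fin d → (Fin r → Bool)) (y : Fin r → Bool),
    (∀ n : Fin r, y n = true ∨ ∃ j ∈ T, p j n = true) →
    (∀ j ∈ T, (b j).f (p j) = false) →
    ∀ j, j ∉ T → (b j).f y = true

lemma inv_cube (n : Fin r) : BInv (cubeL r d n) := by
  intro T p y hcov hz j hj
  show y n = true
  rcases hcov n with h | ⟨j', hj', hpj⟩
  · exact h
  · exact absurd hpj (by have h : p j' n = false := hz j' hj'; simp [h])

lemma inv_combL (δ : Fin d) (A : Finset (Fin d → FDL r)) (hA : A.Nonempty)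
    (h : ∀ a ∈ A, BInv a) : BInv (combL δ A hA) := by
  intro T p y hcov hz j hj
  rw [combL_f]
  by_cases hδT : δ ∈ T
  · -- some a₀ is zero at (p δ, δ); all a are zero at other j' ∈ T
    have hδz := hz δ hδT
    rw [combL_f, if_pos rfl, bool_inf_eq_false_iff] at hδz
    obtain ⟨a₀, ha₀A, ha₀⟩ := hδz
    have hz₀ : ∀ j' ∈ T, (a₀ j').f (p j') = false := by
      intro j' hj'
      by_cases hj'δ : j' = δ
      · subst hj'δ; exact ha₀
      · have := hz j' hj'
        rw [combL_f, if_neg hj'δ] at this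
        have := ((Finset.sup_eq_bot_iff _ _).1 this) a₀ ha₀A
        exact this
    have htrue := h a₀ ha₀A T p y hcov hz₀ j hj
    have hjδ : j ≠ δ := fun h' => hj (h' ▸ hδT)
    rw [if_neg hjδ, bool_sup_eq_true_iff]
    exact ⟨a₀, ha₀A, htrue⟩
  · -- all j' ∈ T are join coordinates: every a is zero everywhere on T
    have hzall : ∀ a ∈ A, ∀ j' ∈ T, (a j').f (p j') = false := by
      intro a haA j' hj'
      have hj'δ : j' ≠ δ := fun h' => hδT (h' ▸ hj')
      have := hz j' hj'
      rw [combL_f, if_neg hj'δ] at this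
      exact ((Finset.sup_eq_bot_iff _ _).1 this) a haA
    have htrue : ∀ a ∈ A, (a j).f y = true := fun a haA =>
      h a haA T p y hcov (hzall a haA) j hj
    split
    · exact bool_inf_eq_true_iff _ _ |>.2 (fun a ha => by
        have := htrue a ha
        next hjdd => exact hjdd ▸ this)
    · rw [bool_sup_eq_true_iff]
      obtain ⟨a, haA⟩ := hA
      exact ⟨a, haA, htrue a haA⟩

lemma inv_of_extL (δ : Fin d) (Q : Set (Fin d → FDL r)) (hQ : ∀ b ∈ Q, BInv b) :
    ∀ b ∈ ExtL δ Q, BInv b := by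
  rintro b ⟨A, hA, hAQ, rfl⟩
  exact inv_combL δ A hA (fun a ha => hQ a (hAQ ha))

lemma inv_of_foldl (l : List (Fin d)) :
    ∀ (Q : Set (Fin d → FDL r)), (∀ b ∈ Q, BInv b) →
    ∀ b ∈ l.foldl (fun S δ => ExtL δ S) Q, BInv b := by
  induction l with
  | nil => intro Q hQ b hb; exact hQ b hb
  | cons δ l ih =>
    intro Q hQ b hb
    exact ih (ExtL δ Q) (inv_of_extL δ Q hQ) b hb

lemma inv_of_good {b : Fin d → FDL r} (hb : GoodL b) : BInv b := by
  refine inv_of_foldl _ _ ?_ b hb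
  rintro b' ⟨n, rfl⟩
  exact inv_cube n

end Fact4Aux
section Fact4Good

variable {r d : ℕ}

lemma combL_singleton (δ : Fin d) (a : Fin d → FDL r) :
    combL δ {a} (Finset.singleton_nonempty a) = a := by
  funext j
  apply FDL.ext'
  funext x
  rw [combL_f]
  split
  · next h => subst h; simp
  · simp

lemma mem_extL_self {δ : Fin d} {Q : Set (Fin d → FDL r)} {b : Fin d → FDL r}
    (hb : b ∈ Q) : b ∈ ExtL δ Q :=
  ⟨{b}, Finset.singleton_nonempty b, by simpa using hb, (combL_singleton δ b).symm⟩

lemma mem_foldl_self {Q : Set (Fin d → FDL r)} {b : Fin d → FDL r} (hb : b ∈ Q) :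
    ∀ l : List (Fin d), b ∈ l.foldl (fun S δ => ExtL δ S) Q := by
  intro l
  induction l generalizing Q with
  | nil => exact hb
  | cons δ l ih => exact ih (mem_extL_self hb)

lemma comb2_eq_combL (δ : Fin d) (a b : Fin d → FDL r) :
    comb2 δ a b = combL δ {a, b} (Finset.insert_nonempty a {b}) := by
  funext j
  apply FDL.ext'
  funext x
  rw [combL_f]
  show (if j = δ then FDL.meet (a j) (b j) else FDL.join (a j) (b j)).f x = _
  split
  · next h =>
    subst h
    show ((a j).f x && (b j).f x) = _
    rw [Finset.inf_insert, Finset.inf_singleton]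
    cases h1 : (a j).f x <;> cases h2 : (b j).f x <;> rfl
  · show ((a j).f x || (b j).f x) = _
    rw [Finset.sup_insert, Finset.sup_singleton]
    cases h1 : (a j).f x <;> cases h2 : (b j).f x <;> rfl

lemma comb2_mem_extL {δ : Fin d} {Q : Set (Fin d → FDL r)} {a b : Fin d → FDL r}
    (ha : a ∈ Q) (hb : b ∈ Q) : comb2 δ a b ∈ ExtL δ Q :=
  ⟨{a, b}, Finset.insert_nonempty a {b}, by
    intro z hz
    simp only [Finset.coe_insert, Finset.coe_singleton, Set.mem_insert_iff,
      Set.mem_singleton_iff] at hz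
    rcases hz with rfl | rfl
    · exact ha
    · exact hb, comb2_eq_combL δ a b⟩

lemma foldl_take_append (l : List (Fin d)) (Q : Set (Fin d → FDL r)) {b : Fin d → FDL r}
    (k : ℕ) (hb : b ∈ (l.take k).foldl (fun S δ => ExtL δ S) Q) :
    b ∈ l.foldl (fun S δ => ExtL δ S) Q := by
  have heq : l = l.take k ++ l.drop k := (List.take_append_drop k l).symm
  rw [show l.foldl (fun S δ => ExtL δ S) Q
      = (l.take k ++ l.drop k).foldl (fun S δ => ExtL δ S) Q by rw [← heq],
    List.foldl_append]
  exact mem_foldl_self hb (l.drop k)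

end Fact4Good
section Fact4Formula

lemma c_formula {r d : ℕ} (hr : 1 ≤ r) (hrd : r - 1 ≤ d)
    (c : ℕ → (Fin d → FDL r))
    (h0 : c 0 = cubeL r d ⟨0, hr⟩)
    (hstep : ∀ k, ∀ hk : k < r - 1,
      c (k + 1) = comb2 ⟨k, lt_of_lt_of_le hk hrd⟩ (c k) (cubeL r d ⟨k + 1, Nat.add_lt_of_lt_sub hk⟩)) :
    ∀ k, k ≤ r - 1 → ∀ (j : Fin d) (x : Fin r → Bool),
      (((c k) j).f x = true ↔
        (if (j : ℕ) < k then
          ((∃ i : Fin r, (i : ℕ) ≤ (j : ℕ) ∧ x i = true) ∧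
            (∃ i : Fin r, (i : ℕ) = (j : ℕ) + 1 ∧ x i = true)) ∨
          (∃ i : Fin r, (j : ℕ) + 2 ≤ (i : ℕ) ∧ (i : ℕ) ≤ k ∧ x i = true)
         else (∃ i : Fin r, (i : ℕ) ≤ k ∧ x i = true))) := by
  intro k
  induction k with
  | zero =>
    intro _ j x
    rw [h0, if_neg (by first | omega | (simp only [Fin.val_mk]; omega))]
    show x ⟨0, hr⟩ = true ↔ _
    constructor
    · intro h; exact ⟨⟨0, hr⟩, by simp, h⟩
    · rintro ⟨i, hi, hxi⟩
      have : i = ⟨0, hr⟩ := Fin.ext (by first | omega | (simp only [Fin.val_mk]; omega))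
      rwa [this] at hxi
  | succ k ih =>
    intro hk1 j x
    have hk : k < r - 1 := by omega
    have hkd : k < d := lt_of_lt_of_le hk hrd
    have hk1r : k + 1 < r := by omega
    rw [hstep k hk]
    simp only [comb2]
    by_cases hjk : j = (⟨k, hkd⟩ : Fin d)
    · rw [if_pos hjk]
      show (((c k) j).f x && x ⟨k + 1, hk1r⟩) = true ↔ _
      rw [Bool.and_eq_true, ih (by first | omega | (simp only [Fin.val_mk]; omega)) j x, if_neg (by rw [hjk]; simp only [Fin.val_mk]; omega),
        if_pos (by rw [hjk]; simp)]
      have hjval : (j : ℕ) = k := by rw [hjk]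
      constructor
      · rintro ⟨⟨i, hi, hxi⟩, hx1⟩
        exact Or.inl ⟨⟨i, by omega, hxi⟩, ⟨⟨k + 1, hk1r⟩, by simp [hjval], hx1⟩⟩
      · rintro (⟨⟨i, hi, hxi⟩, ⟨i2, hi2, hxi2⟩⟩ | ⟨i, hi1, hi2, hxi⟩)
        · refine ⟨⟨i, by omega, hxi⟩, ?_⟩
          have : i2 = ⟨k + 1, hk1r⟩ := Fin.ext (by first | omega | (simp only [Fin.val_mk]; omega))
          rwa [this] at hxi2
        · omega
    · rw [if_neg hjk]
      show (((c k) j).f x || x ⟨k + 1, hk1r⟩) = true ↔ _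
      have hjvk : (j : ℕ) ≠ k := fun h => hjk (Fin.ext h)
      rw [Bool.or_eq_true, ih (by first | omega | (simp only [Fin.val_mk]; omega)) j x]
      by_cases hjlt : (j : ℕ) < k
      · rw [if_pos hjlt, if_pos (by first | omega | (simp only [Fin.val_mk]; omega))]
        constructor
        · rintro ((⟨hs, hg⟩ | ⟨i, hi1, hi2, hxi⟩) | hx1)
          · exact Or.inl ⟨hs, hg⟩
          · exact Or.inr ⟨i, hi1, by omega, hxi⟩
          · exact Or.inr ⟨⟨k + 1, hk1r⟩, by simp; omega, by simp, hx1⟩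
        · rintro (⟨hs, hg⟩ | ⟨i, hi1, hi2, hxi⟩)
          · exact Or.inl (Or.inl ⟨hs, hg⟩)
          · by_cases hik : (i : ℕ) ≤ k
            · exact Or.inl (Or.inr ⟨i, hi1, hik, hxi⟩)
            · have : i = ⟨k + 1, hk1r⟩ := Fin.ext (by first | omega | (simp only [Fin.val_mk]; omega))
              exact Or.inr (by rwa [this] at hxi)
      · rw [if_neg hjlt, if_neg (by first | omega | (simp only [Fin.val_mk]; omega))]
        constructor
        · rintro (⟨i, hi, hxi⟩ | hx1)
          · exact ⟨i, by omega, hxi⟩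
          · exact ⟨⟨k + 1, hk1r⟩, by simp, hx1⟩
        · rintro ⟨i, hi, hxi⟩
          by_cases hik : (i : ℕ) ≤ k
          · exact Or.inl ⟨i, hik, hxi⟩
          · have : i = ⟨k + 1, hk1r⟩ := Fin.ext (by first | omega | (simp only [Fin.val_mk]; omega))
            exact Or.inr (by rwa [this] at hxi)

end Fact4Formula
section Fact4Min

/-- Specification of the coordinates of the brick `c (r-1)`. -/
def CSpec (r d : ℕ) (b : Fin d → FDL r) : Prop :=
  ∀ (j : Fin d) (x : Fin r → Bool),
    ((b j).f x = true ↔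
      (if (j : ℕ) < r - 1 then
        ((∃ i : Fin r, (i : ℕ) ≤ (j : ℕ) ∧ x i = true) ∧
          (∃ i : Fin r, (i : ℕ) = (j : ℕ) + 1 ∧ x i = true)) ∨
        (∃ i : Fin r, (j : ℕ) + 2 ≤ (i : ℕ) ∧ (i : ℕ) ≤ r - 1 ∧ x i = true)
       else (∃ i : Fin r, (i : ℕ) ≤ r - 1 ∧ x i = true)))

def ptE (r m : ℕ) : Fin r → Bool := fun i => decide ((i : ℕ) = m)
def ptW (r m : ℕ) : Fin r → Bool := fun i => decide ((i : ℕ) ≤ m)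

variable {r d : ℕ}

lemma bool_le_false {a : Bool} (h : a ≤ false) : a = false := by
  cases a
  · rfl
  · exact absurd h (by decide)

lemma fdl_le_apply {a b : FDL r} (h : a ≤ b) (x : Fin r → Bool) : a.f x ≤ b.f x := h x

lemma zE {cb : Fin d → FDL r} (hc : CSpec r d cb) (j : Fin d) (hj : (j : ℕ) + 2 ≤ r) :
    (cb j).f (ptE r ((j : ℕ) + 1)) = false := by
  cases h : (cb j).f (ptE r ((j : ℕ) + 1)) with
  | false => rfl
  | true =>
    exfalso
    have := (hc j _).1 h
    rw [if_pos (by omega)] at this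
    rcases this with ⟨⟨i, hi, hxi⟩, -⟩ | ⟨i, hi1, hi2, hxi⟩ <;>
      simp only [ptE, decide_eq_true_eq] at hxi <;> omega

lemma zW {cb : Fin d → FDL r} (hc : CSpec r d cb) (j : Fin d) (hj : (j : ℕ) + 2 ≤ r) :
    (cb j).f (ptW r (j : ℕ)) = false := by
  cases h : (cb j).f (ptW r (j : ℕ)) with
  | false => rfl
  | true =>
    exfalso
    have := (hc j _).1 h
    rw [if_pos (by omega)] at this
    rcases this with ⟨-, ⟨i, hi, hxi⟩⟩ | ⟨i, hi1, hi2, hxi⟩ <;>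
      simp only [ptW, decide_eq_true_eq] at hxi <;> omega

/-- The core of the minimality argument. -/
lemma min_core (hr2 : 2 ≤ r) (hrd : r - 1 ≤ d) {cb b : Fin d → FDL r}
    (hc : CSpec r d cb) (hInv : BInv b) (hle : b ≤ cb)
    (δ : Fin d) (x : Fin r → Bool) (n : Fin r)
    (hn : x n = true) (hbx : (b δ).f x = false)
    (hnum : (δ : ℕ) + 2 ≤ (n : ℕ) ∨ r - 1 ≤ (δ : ℕ) ∨
      ((n : ℕ) ≤ (δ : ℕ) ∧ (δ : ℕ) + 2 ≤ r ∧ ((δ : ℕ) = r - 2 → 3 ≤ r)))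
    (hxD : ∀ hD : (δ : ℕ) + 1 < r, (n : ℕ) ≤ (δ : ℕ) → x ⟨(δ : ℕ) + 1, hD⟩ = true) :
    False := by
  set D := (δ : ℕ) with hD
  set nv := (n : ℕ) with hnv
  have hnr : nv < r := n.isLt
  have hDd : D < d := δ.isLt
  obtain ⟨q, hqcases⟩ : ∃ q, (D = r - 2 ∧ q = r - 3) ∨ (D ≠ r - 2 ∧ q = r - 2) := by
    by_cases h : D = r - 2
    · exact ⟨r - 3, Or.inl ⟨h, rfl⟩⟩
    · exact ⟨r - 2, Or.inr ⟨h, rfl⟩⟩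
  have hqr : q + 2 ≤ r := by omega
  have hqd : q < d := by omega
  have hDq : D ≠ q := by omega
  have hjq : ((⟨q, hqd⟩ : Fin d) : ℕ) = q := rfl
  set y : Fin r → Bool := if nv = q + 1 then ptW r q else ptE r (q + 1) with hy
  set T : Finset (Fin d) :=
    insert δ (Finset.univ.filter fun j : Fin d =>
      nv - 1 ≤ (j : ℕ) ∧ (j : ℕ) + 2 ≤ r ∧ (j : ℕ) ≠ r - 2 ∧ (j : ℕ) ≠ q) with hT
  set p : Fin d → (Fin r → Bool) := fun j =>
    if j = δ then x else if (j : ℕ) + 1 = nv then ptW r (nv - 1) else ptE r ((j : ℕ) + 1)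
    with hp
  -- membership facts
  have hmemT : ∀ j : Fin d, j ∈ T ↔ (j = δ ∨
      (nv - 1 ≤ (j : ℕ) ∧ (j : ℕ) + 2 ≤ r ∧ (j : ℕ) ≠ r - 2 ∧ (j : ℕ) ≠ q)) := by
    intro j
    rw [hT]
    simp [Finset.mem_insert, Finset.mem_filter]
  -- coverage
  have hcov : ∀ i : Fin r, y i = true ∨ ∃ j ∈ T, p j i = true := by
    intro i
    rcases lt_trichotomy ((i : ℕ)) nv with hlt | heq | hgt
    · -- i < n
      by_cases hny : nv = q + 1
      · left
        rw [hy, if_pos hny]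
        simp only [ptW, decide_eq_true_eq]
        omega
      · -- use the pair (w (n-1), n-1)
        right
        have hn1 : nv - 1 < d := by omega
        refine ⟨⟨nv - 1, hn1⟩, ?_, ?_⟩
        · rw [hmemT]
          right
          show nv - 1 ≤ nv - 1 ∧ nv - 1 + 2 ≤ r ∧ nv - 1 ≠ r - 2 ∧ nv - 1 ≠ q
          omega
        · have hne : (⟨nv - 1, hn1⟩ : Fin d) ≠ δ := by
            intro h
            have h2 : nv - 1 = D := congrArg Fin.val h
            omega
          rw [hp]
          simp only [if_neg hne]
          rw [if_pos (show ((⟨nv - 1, hn1⟩ : Fin d) : ℕ) + 1 = nv by show nv - 1 + 1 = nv; omega)]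
          simp only [ptW, decide_eq_true_eq]
          omega
    · -- i = n : covered by x at coordinate δ
      right
      refine ⟨δ, by rw [hmemT]; left; rfl, ?_⟩
      rw [hp]
      simp only [if_pos rfl]
      have : i = n := Fin.ext heq
      rw [this]; exact hn
    · -- i > n
      by_cases hiD : (i : ℕ) = D + 1
      · -- covered by x (case 3)
        right
        refine ⟨δ, by rw [hmemT]; left; rfl, ?_⟩
        rw [hp]
        simp only [if_pos rfl]
        have hD1r : D + 1 < r := by omega
        have : i = ⟨D + 1, hD1r⟩ := Fin.ext (show (i : ℕ) = D + 1 by omega)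
        rw [this]
        exact hxD hD1r (by omega)
      · by_cases hiq : (i : ℕ) = q + 1
        · -- covered by y
          left
          have hnyn : nv ≠ q + 1 := by omega
          rw [hy, if_neg hnyn]
          simp only [ptE, decide_eq_true_eq]
          omega
        · -- main pair (e i, i-1)
          right
          have hir1 : (i : ℕ) ≠ r - 1 := by omega
          have hi1 : (i : ℕ) - 1 < d := by omega
          refine ⟨⟨(i : ℕ) - 1, hi1⟩, ?_, ?_⟩
          · rw [hmemT]
            right
            show nv - 1 ≤ (i : ℕ) - 1 ∧ (i : ℕ) - 1 + 2 ≤ r ∧ (i : ℕ) - 1 ≠ r - 2 ∧ (i : ℕ) - 1 ≠ q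
            omega
          · have hne : (⟨(i : ℕ) - 1, hi1⟩ : Fin d) ≠ δ := by
              intro h
              have h2 : (i : ℕ) - 1 = D := congrArg Fin.val h
              omega
            rw [hp]
            simp only [if_neg hne]
            rw [if_neg (show ¬(((⟨(i : ℕ) - 1, hi1⟩ : Fin d) : ℕ) + 1 = nv) by show ¬((i : ℕ) - 1 + 1 = nv); omega)]
            simp only [ptE, decide_eq_true_eq]
            show (i : ℕ) = (i : ℕ) - 1 + 1
            omega
  -- zeros
  have hz : ∀ j ∈ T, (b j).f (p j) = false := by
    intro j hj
    by_cases hjδ : j = δ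
    · rw [hp]; simp only [if_pos hjδ]; rw [hjδ]; exact hbx
    · rw [hmemT] at hj
      rcases hj with h | ⟨h1, h2, h3, h4⟩
      · exact absurd h hjδ
      · rw [hp]
        simp only [if_neg hjδ]
        by_cases hjn : (j : ℕ) + 1 = nv
        · rw [if_pos hjn]
          apply bool_le_false
          have hzero : (cb j).f (ptW r (nv - 1)) = false := by
            have : nv - 1 = (j : ℕ) := by omega
            rw [this]
            exact zW hc j h2
          rw [← hzero]
          exact fdl_le_apply (hle j) _
        · rw [if_neg hjn]
          apply bool_le_false
          have hzero : (cb j).f (ptE r ((j : ℕ) + 1)) = false := zE hc j h2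
          rw [← hzero]
          exact fdl_le_apply (hle j) _
  -- jstar not in T
  have hjT : (⟨q, hqd⟩ : Fin d) ∉ T := by
    rw [hmemT]
    push_neg
    refine ⟨?_, ?_⟩
    · intro h
      have h2 : q = D := congrArg Fin.val h
      omega
    · intro _ _ _
      exact hjq
  -- apply the invariant
  have htrue := hInv T p y hcov hz ⟨q, hqd⟩ hjT
  have hfalse : (cb ⟨q, hqd⟩).f y = false := by
    rw [hy]
    by_cases hny : nv = q + 1
    · rw [if_pos hny]
      exact zW hc ⟨q, hqd⟩ (show q + 2 ≤ r from hqr)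
    · rw [if_neg hny]
      exact zE hc ⟨q, hqd⟩ (show q + 2 ≤ r from hqr)
  have := fdl_le_apply (hle ⟨q, hqd⟩) y
  rw [htrue, hfalse] at this
  exact absurd this (by decide)

end Fact4Min
section Fact4Assemble

variable {r d : ℕ}

lemma min_of_spec (hr : 1 ≤ r) (hrd : r - 1 ≤ d) {cb : Fin d → FDL r}
    (hc : CSpec r d cb) (b : Fin d → FDL r) (hg : BInv b) (hle : b ≤ cb) : b = cb := by
  funext δ
  apply FDL.ext'
  funext x
  cases hcx : (cb δ).f x with
  | false =>
    apply bool_le_false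
    rw [← hcx]
    exact fdl_le_apply (hle δ) x
  | true =>
    cases hbx : (b δ).f x with
    | true => rfl
    | false =>
      exfalso
      by_cases hxtop : ∀ i, x i = true
      · have hxt : x = fun _ => true := funext hxtop
        rw [hxt, (b δ).map_top] at hbx
        exact Bool.noConfusion hbx
      push_neg at hxtop
      obtain ⟨i0, hi0⟩ := hxtop
      have hi0f : x i0 = false := by
        cases h : x i0
        · rfl
        · exact absurd h hi0
      have hi0lt := i0.isLt
      have hfx := (hc δ x).1 hcx
      have hr2 : 2 ≤ r := by
        by_contra hr1
        have hex : ∃ i : Fin r, x i = true := by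
          split at hfx
          · rcases hfx with ⟨⟨i, _, hxi⟩, -⟩ | ⟨i, _, _, hxi⟩ <;> exact ⟨i, hxi⟩
          · rcases hfx with ⟨i, _, hxi⟩; exact ⟨i, hxi⟩
        obtain ⟨i1, hxi1⟩ := hex
        have hi1lt := i1.isLt
        have : i1 = i0 := Fin.ext (by omega)
        rw [this, hi0f] at hxi1
        exact Bool.noConfusion hxi1
      by_cases hδr : (δ : ℕ) < r - 1
      · rw [if_pos hδr] at hfx
        rcases hfx with ⟨⟨m, hm, hxm⟩, ⟨n1, hn1, hxn1⟩⟩ | ⟨n, hn1, hn2, hxn⟩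
        · -- case (ii)
          have hn1lt := n1.isLt
          refine min_core hr2 hrd hc hg hle δ x m hxm hbx
            (Or.inr (Or.inr ⟨by omega, by omega, ?_⟩)) ?_
          · -- δ = r - 2 → 3 ≤ r
            intro hδ2
            by_contra h3
            have hrr : r = 2 := by omega
            have hmlt := m.isLt
            have : (i0 : ℕ) = (m : ℕ) ∨ (i0 : ℕ) = (n1 : ℕ) := by omega
            rcases this with h | h
            · rw [Fin.ext h, hxm] at hi0f; exact Bool.noConfusion hi0f
            · rw [Fin.ext h, hxn1] at hi0f; exact Bool.noConfusion hi0f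
          · intro hD _
            have : (⟨(δ : ℕ) + 1, hD⟩ : Fin r) = n1 := Fin.ext (show (δ : ℕ) + 1 = (n1 : ℕ) by omega)
            rw [this]
            exact hxn1
        · -- case (i)
          exact min_core hr2 hrd hc hg hle δ x n hxn hbx (Or.inl (by omega))
            (fun hD hle' => absurd hle' (by omega))
      · rw [if_neg hδr] at hfx
        obtain ⟨n, hn1, hxn⟩ := hfx
        exact min_core hr2 hrd hc hg hle δ x n hxn hbx (Or.inr (Or.inl (by omega)))
          (fun hD => absurd hD (by omega))

lemma good_c (hr : 1 ≤ r) (hrd : r - 1 ≤ d)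
    (c : ℕ → (Fin d → FDL r))
    (h0 : c 0 = cubeL r d ⟨0, hr⟩)
    (hstep : ∀ k, ∀ hk : k < r - 1,
      c (k + 1) = comb2 ⟨k, lt_of_lt_of_le hk hrd⟩ (c k) (cubeL r d ⟨k + 1, Nat.add_lt_of_lt_sub hk⟩)) :
    GoodL (c (r - 1)) := by
  have key : ∀ k, k ≤ r - 1 →
      c k ∈ ((List.finRange d).take k).foldl (fun S δ => ExtL δ S) (Set.range (cubeL r d)) := by
    intro k
    induction k with
    | zero =>
      intro _
      rw [h0]
      exact Set.mem_range_self _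
    | succ k ih =>
      intro hk1
      have hk : k < r - 1 := by omega
      have hkd : k < d := lt_of_lt_of_le hk hrd
      rw [hstep k hk]
      have htake : (List.finRange d).take (k + 1)
          = (List.finRange d).take k ++ [(⟨k, hkd⟩ : Fin d)] := by
        rw [List.take_succ]
        congr 1
        rw [List.getElem?_eq_getElem (by simpa using hkd)]
        simp [List.getElem_finRange]
      rw [htake, List.foldl_append]
      exact comb2_mem_extL (ih (by omega)) (mem_foldl_self (Set.mem_range_self _) _)
  have h1 := key (r - 1) le_rfl
  exact foldl_take_append _ _ _ h1

lemma eval_ptE_false {cb : Fin d → FDL r} (hc : CSpec r d cb) (δ : Fin d)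
    (hδ : (δ : ℕ) < r - 1) (m : ℕ) (hm : m ≤ (δ : ℕ) + 1) :
    (cb δ).f (ptE r m) = false := by
  cases h : (cb δ).f (ptE r m) with
  | false => rfl
  | true =>
    exfalso
    have := (hc δ _).1 h
    rw [if_pos hδ] at this
    rcases this with ⟨⟨i, hi, hxi⟩, ⟨i2, hi2, hxi2⟩⟩ | ⟨i, hi1, hi2, hxi⟩
    · simp only [ptE, decide_eq_true_eq] at hxi hxi2
      omega
    · simp only [ptE, decide_eq_true_eq] at hxi
      omega

lemma sup_ptE (A : Finset (Fin r)) (m : ℕ) :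
    A.sup (ptE r m) = true ↔ ∃ a ∈ A, (a : ℕ) = m := by
  rw [bool_sup_eq_true_iff]
  simp [ptE]

lemma not_join_of_gens {cb : Fin d → FDL r} (hc : CSpec r d cb) (δ : Fin d)
    (hδ : (δ : ℕ) < r - 1) :
    ¬∃ A : Finset (Fin r), (cb δ).f = fun x => A.sup x := by
  rintro ⟨A, hA⟩
  have hr2 : 2 ≤ r := by omega
  -- every member of A has value ≥ δ + 2
  have hmem : ∀ a ∈ A, (δ : ℕ) + 2 ≤ (a : ℕ) := by
    intro a ha
    by_contra hcon
    have halt := a.isLt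
    have h1 : (cb δ).f (ptE r (a : ℕ)) = false := eval_ptE_false hc δ hδ _ (by omega)
    rw [hA] at h1
    have h3 : A.sup (ptE r (a : ℕ)) = false := h1
    have h2 : A.sup (ptE r (a : ℕ)) = true :=
      (sup_ptE A _).2 ⟨a, ha, rfl⟩
    rw [h2] at h3
    exact Bool.noConfusion h3
  -- evaluate at z = e_0 ∨ e_{δ+1}
  set z : Fin r → Bool := fun i => decide ((i : ℕ) = 0 ∨ (i : ℕ) = (δ : ℕ) + 1) with hz
  have hzt : (cb δ).f z = true := by
    rw [hc δ z, if_pos hδ]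
    left
    constructor
    · exact ⟨⟨0, by omega⟩, by simp [hz]⟩
    · exact ⟨⟨(δ : ℕ) + 1, by omega⟩, by simp [hz]⟩
  have hzf : A.sup z = false := by
    cases h : A.sup z with
    | false => rfl
    | true =>
      exfalso
      rw [bool_sup_eq_true_iff] at h
      obtain ⟨a, ha, hza⟩ := h
      have := hmem a ha
      rw [hz] at hza
      simp only [decide_eq_true_eq] at hza
      omega
  rw [hA] at hzt
  have hzt' : A.sup z = true := hzt
  rw [hzf] at hzt'
  exact Bool.noConfusion hzt' 

lemma alpha_univ {cb : Fin d → FDL r} (hr : 1 ≤ r) (hd2 : 2 ≤ d) (hrd : r - 1 ≤ d)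
    (hc : CSpec r d cb) : brickAlphabetL cb = Finset.univ := by
  apply Finset.eq_univ_of_forall
  intro m
  rw [brickAlphabetL, Finset.mem_filter]
  refine ⟨Finset.mem_univ _, ?_⟩
  by_cases hr1 : r = 1
  · -- any coordinate works, with x = ⊥
    refine ⟨⟨0, by omega⟩, fun _ => false, ?_⟩
    rw [FDL.map_bot]
    have hup : Function.update (fun _ => false) m (!false) = fun _ => true := by
      funext i
      have : i = m := Fin.ext (by have := i.isLt; have := m.isLt; omega)
      rw [this, Function.update_self]
      rfl
    rw [hup, FDL.map_top]
    exact Bool.noConfusion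
  · have hr2 : 2 ≤ r := by omega
    have hmlt := m.isLt
    set j : Fin d := ⟨r - 2, by omega⟩ with hj
    have hjv : (j : ℕ) = r - 2 := rfl
    have hjlt : (j : ℕ) < r - 1 := by omega
    refine ⟨j, ?_⟩
    by_cases hm : (m : ℕ) = r - 1
    · -- use x = ptW r (r-2)
      refine ⟨ptW r (r - 2), ?_⟩
      have h1 : (cb j).f (ptW r (r - 2)) = false := by
        have := zW hc j (by omega)
        rwa [hjv] at this
      rw [h1]
      intro hcon
      have h2 : (cb j).f (Function.update (ptW r (r - 2)) m (!ptW r (r - 2) m)) = true := by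
        rw [hc j _, if_pos hjlt]
        left
        constructor
        · refine ⟨⟨0, by omega⟩, by simp only [hjv, Fin.val_mk]; omega, ?_⟩
          rw [Function.update_of_ne (by intro h; have h2 : (0 : ℕ) = (m : ℕ) := congrArg Fin.val h; omega)]
          simp [ptW]
        · refine ⟨m, by simp only [hjv, Fin.val_mk]; omega, ?_⟩
          rw [Function.update_self]
          simp [ptW]
          omega
      rw [← hcon] at h2
      exact Bool.noConfusion h2
    · -- m ≤ r - 2 : use x = ptE r (r-1)
      refine ⟨ptE r (r - 1), ?_⟩
      have h1 : (cb j).f (ptE r (r - 1)) = false := by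
        have := zE hc j (by omega)
        have he : (j : ℕ) + 1 = r - 1 := by omega
        rwa [he] at this
      rw [h1]
      intro hcon
      have h2 : (cb j).f (Function.update (ptE r (r - 1)) m (!ptE r (r - 1) m)) = true := by
        rw [hc j _, if_pos hjlt]
        left
        constructor
        · refine ⟨m, by simp only [hjv, Fin.val_mk]; omega, ?_⟩
          rw [Function.update_self]
          simp [ptE]
          omega
        · refine ⟨⟨r - 1, by omega⟩, by simp only [hjv, Fin.val_mk]; omega, ?_⟩
          rw [Function.update_of_ne (by intro h; have h2 : (r - 1 : ℕ) = (m : ℕ) := congrArg Fin.val h; omega)]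
          simp [ptE]
      rw [← hcon] at h2
      exact Bool.noConfusion h2

end Fact4Assemble
/-- Fact F4: for `r ≥ 1` and `d ≥ max(2, r-1)`, the brick
`c_r = ((W 1 ⋈_1 W 2) ⋈_2 W 3) ⋈_3 ⋯ ⋈_{r-1} W r` (here `c` is 0-indexed, so `c_r`
is `c (r-1)`) is a minimal brick of `Λ[r,d]` whose envelope is the join of all `r`
generators; for each direction `δ < r-1` its `δ`-th coordinate differs from this
envelope (indeed it is not a join of generators); hence it has exactly `r-1`
non-envelope coordinates. -/
theorem statement9 (r d : ℕ) (hr : 1 ≤ r) (hd2 : 2 ≤ d) (hrd : r - 1 ≤ d)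
    (c : ℕ → (Fin d → FDL r))
    (h0 : c 0 = cubeL r d ⟨0, hr⟩)
    (hstep : ∀ k, ∀ hk : k < r - 1,
      c (k + 1) = comb2 ⟨k, lt_of_lt_of_le hk hrd⟩ (c k) (cubeL r d ⟨k + 1, by omega⟩)) :
    MinimalL (c (r - 1)) ∧
    envFunL (c (r - 1)) = (fun x => (Finset.univ : Finset (Fin r)).sup x) ∧
    (∀ δ : Fin d, (δ : ℕ) < r - 1 →
      (c (r - 1) δ).f ≠ envFunL (c (r - 1)) ∧
      ¬∃ A : Finset (Fin r), (c (r - 1) δ).f = fun x => A.sup x) ∧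
    (Finset.univ.filter fun δ : Fin d => (c (r - 1) δ).f ≠ envFunL (c (r - 1))).card
      = r - 1 := by
  have hc : CSpec r d (c (r - 1)) :=
    fun j x => c_formula hr hrd c h0 hstep (r - 1) le_rfl j x
  have henv : envFunL (c (r - 1)) = fun x => (Finset.univ : Finset (Fin r)).sup x := by
    funext x
    rw [envFunL, alpha_univ hr hd2 hrd hc]
  have hne : ∀ δ : Fin d, (δ : ℕ) < r - 1 → (c (r - 1) δ).f ≠ envFunL (c (r - 1)) := by
    intro δ hδ h
    have h0' : (c (r - 1) δ).f (ptE r 0) = false := eval_ptE_false hc δ hδ 0 (by omega)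
    have h1' : envFunL (c (r - 1)) (ptE r 0) = true := by
      rw [henv]
      exact (bool_sup_eq_true_iff _ _).2 ⟨⟨0, by omega⟩, Finset.mem_univ _, by simp [ptE]⟩
    rw [h, h1'] at h0'
    exact Bool.noConfusion h0'
  have heq : ∀ δ : Fin d, ¬((δ : ℕ) < r - 1) → (c (r - 1) δ).f = envFunL (c (r - 1)) := by
    intro δ hδ
    funext x
    rw [henv]
    show (c (r - 1) δ).f x = (Finset.univ : Finset (Fin r)).sup x
    cases h1 : (c (r - 1) δ).f x with
    | true =>
      have := (hc δ x).1 h1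
      rw [if_neg hδ] at this
      obtain ⟨i, _, hxi⟩ := this
      exact ((bool_sup_eq_true_iff _ _).2 ⟨i, Finset.mem_univ _, hxi⟩).symm
    | false =>
      cases h2 : (Finset.univ : Finset (Fin r)).sup x with
      | false => rfl
      | true =>
        exfalso
        obtain ⟨i, -, hxi⟩ := (bool_sup_eq_true_iff _ _).1 h2
        have hlt := i.isLt
        have h3 : (c (r - 1) δ).f x = true := by
          rw [hc δ x, if_neg hδ]
          exact ⟨i, by omega, hxi⟩
        rw [h1] at h3
        exact Bool.noConfusion h3
  refine ⟨⟨good_c hr hrd c h0 hstep,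
      fun b hb hle => min_of_spec hr hrd hc b (inv_of_good hb) hle⟩,
    henv, fun δ hδ => ⟨hne δ hδ, not_join_of_gens hc δ hδ⟩, ?_⟩
  have hs : (Finset.univ.filter fun δ : Fin d => (c (r - 1) δ).f ≠ envFunL (c (r - 1)))
      = (Finset.univ.filter fun δ : Fin d => (δ : ℕ) < r - 1) := by
    apply Finset.filter_congr
    intro δ _
    constructor
    · intro hne'
      by_contra h
      exact hne' (heq δ h)
    · exact hne δ
  rw [hs]
  apply Finset.card_eq_of_bijective (fun i hi => (⟨i, by omega⟩ : Fin d))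
  · intro a ha
    rw [Finset.mem_filter] at ha
    exact ⟨(a : ℕ), ha.2, Fin.ext rfl⟩
  · intro i hi
    rw [Finset.mem_filter]
    exact ⟨Finset.mem_univ _, show i < r - 1 from hi⟩
  · intro i j hi hj hij
    exact congrArg Fin.val hij
end
end

section
/- (Dedekind-number interpretation of dimension 2.) For every r ≥ 1, the map sending α ∈ L[r] to the brick (α, α*) ∈ Λ[r,2], where α* is the de Morgan dual of α defined by α*(x) = ¬α(¬x) (negation applied coordinatewise), is a bijection from L[r] onto the set of minimal bricks of Λ[r,2]. Consequently the number of minimal bricks of Λ[r,2] equals card L[r], the r-th Dedekind number (the number of monotone Boolean functions of r variables other than the two constants). -/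
open scoped Classical

noncomputable section

/-- The de Morgan dual `α*` of `α ∈ L[r]`: `α*(x) = ¬ α(¬x)`. -/
def FDL.dual {r : ℕ} (a : FDL r) : FDL r where
  f x := !(a.f fun n => !(x n))
  mono := fun x y h => by
    show (!(a.f fun n => !(x n))) ≤ (!(a.f fun n => !(y n)))
    have key : a.f (fun n => !(y n)) ≤ a.f (fun n => !(x n)) := by
      apply a.mono
      intro i
      show (!(y i)) ≤ (!(x i))
      have hi := h i
      revert hi
      cases x i <;> cases y i <;> decide
    revert key
    cases (a.f fun n => !(x n)) <;> cases (a.f fun n => !(y n)) <;> decide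
  map_bot := by
    show (!(a.f fun _ => !(false : Bool))) = false
    rw [show (fun _ : Fin r => !(false : Bool)) = (fun _ : Fin r => true) from rfl,
      a.map_top]
    rfl
  map_top := by
    show (!(a.f fun _ => !(true : Bool))) = true
    rw [show (fun _ : Fin r => !(true : Bool)) = (fun _ : Fin r => false) from rfl,
      a.map_bot]
    rfl


namespace FDL

theorem dual_dual {r : ℕ} (a : FDL r) : a.dual.dual = a := by
  apply ext'; funext x; simp [dual]

theorem dual_antitone {r : ℕ} {a b : FDL r} (h : a ≤ b) : b.dual ≤ a.dual := by
  intro x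
  have hx := h (fun n => !(x n))
  show (!(b.f fun n => !(x n))) ≤ (!(a.f fun n => !(x n)))
  revert hx
  cases (a.f fun n => !(x n)) <;> cases (b.f fun n => !(x n)) <;> decide

end FDL

lemma bsup_iff {β : Type*} (s : Finset β) (f : β → Bool) :
    s.sup f = true ↔ ∃ a ∈ s, f a = true := by
  induction s using Finset.induction_on with
  | empty => simp
  | insert _ _ h ih => simp [ih]

lemma binf_iff {β : Type*} (s : Finset β) (f : β → Bool) :
    s.inf f = true ↔ ∀ a ∈ s, f a = true := by
  induction s using Finset.induction_on with
  | empty => simp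
  | insert _ _ h ih => simp [ih]

lemma binf_not {β : Type*} (s : Finset β) (f : β → Bool) :
    (s.inf fun a => !(f a)) = !(s.sup f) := by
  induction s using Finset.induction_on with
  | empty => simp
  | insert _ _ h ih => simp [ih]

lemma combL_same_f {r d : ℕ} (δ : Fin d) (A : Finset (Fin d → FDL r)) (hA : A.Nonempty)
    (x : Fin r → Bool) : ((combL δ A hA) δ).f x = A.inf fun b => (b δ).f x := by
  simp [combL]

lemma combL_ne_f {r d : ℕ} (δ j : Fin d) (hj : j ≠ δ) (A : Finset (Fin d → FDL r))
    (hA : A.Nonempty) (x : Fin r → Bool) :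
    ((combL δ A hA) j).f x = A.sup fun b => (b j).f x := by
  simp [combL, hj]

lemma extAllL_two {r : ℕ} (Q : Set (Fin 2 → FDL r)) :
    ExtAllL Q = ExtL 1 (ExtL 0 Q) := rfl

lemma ext0_dual {r : ℕ} {b : Fin 2 → FDL r}
    (hb : b ∈ ExtL 0 (Set.range (cubeL r 2))) : b 1 = FDL.dual (b 0) := by
  obtain ⟨A, hA, hsub, rfl⟩ := hb
  apply FDL.ext'; funext x
  show ((combL 0 A hA) 1).f x = !(((combL 0 A hA) 0).f fun n => !(x n))
  rw [combL_ne_f 0 1 (by decide) A hA, combL_same_f 0 A hA]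
  have : (A.inf fun b => (b 0).f fun n => !(x n)) = A.inf fun b => !((b 0).f x) := by
    apply Finset.inf_congr rfl
    intro c hc
    obtain ⟨n, rfl⟩ := hsub hc
    rfl
  rw [this, binf_not, Bool.not_not]
  apply Finset.sup_congr rfl
  intro c hc
  obtain ⟨n, rfl⟩ := hsub hc
  rfl

lemma ext1_dual {r : ℕ} {B : Finset (Fin 2 → FDL r)} (hB : B.Nonempty)
    (h : ∀ c ∈ B, c 1 = FDL.dual (c 0)) :
    (combL 1 B hB) 1 = FDL.dual ((combL 1 B hB) 0) := by
  apply FDL.ext'; funext x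
  show ((combL 1 B hB) 1).f x = !(((combL 1 B hB) 0).f fun n => !(x n))
  rw [combL_same_f 1 B hB, combL_ne_f 1 0 (by decide) B hB, ← binf_not]
  apply Finset.inf_congr rfl
  intro c hc
  rw [h c hc]
  simp [FDL.dual]

lemma good_dual {r : ℕ} {b : Fin 2 → FDL r} (hb : GoodL b) :
    b = ![b 0, FDL.dual (b 0)] := by
  have hb' : b ∈ ExtL 1 (ExtL 0 (Set.range (cubeL r 2))) := hb
  obtain ⟨B, hB, hsub, rfl⟩ := hb'
  have h1 : (combL 1 B hB) 1 = FDL.dual ((combL 1 B hB) 0) :=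
    ext1_dual hB (fun c hc => ext0_dual (hsub hc))
  funext i; fin_cases i
  · rfl
  · simpa using h1

lemma good_pair {r : ℕ} (α : FDL r) : GoodL (![α, FDL.dual α] : Fin 2 → FDL r) := by
  show _ ∈ ExtL 1 (ExtL 0 (Set.range (cubeL r 2)))
  classical
  set T : Finset (Fin r → Bool) := Finset.univ.filter (fun y => α.f y = true) with hT
  have hTtop : (fun _ => true) ∈ T := by simp [hT, α.map_top]
  have hSne : ∀ y ∈ T, (Finset.univ.filter fun n : Fin r => y n = true).Nonempty := by
    intro y hy
    by_contra hempty
    rw [Finset.not_nonempty_iff_eq_empty, Finset.filter_eq_empty_iff] at hempty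
    have hy0 : y = fun _ => false := by
      funext n
      have := hempty (Finset.mem_univ n)
      revert this; cases y n <;> simp
    rw [hT, Finset.mem_filter] at hy
    rw [hy0, α.map_bot] at hy
    exact absurd hy.2 (by simp)
  set A : (Fin r → Bool) → Finset (Fin 2 → FDL r) := fun y =>
    (Finset.univ.filter fun n : Fin r => y n = true).image (cubeL r 2) with hA
  have hAne : ∀ y ∈ T, (A y).Nonempty := fun y hy => (hSne y hy).image _
  set c : {y // y ∈ T} → (Fin 2 → FDL r) := fun y => combL 0 (A y.1) (hAne y.1 y.2) with hc
  set B : Finset (Fin 2 → FDL r) := T.attach.image c with hBdef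
  have hBne : B.Nonempty := ((Finset.attach_nonempty_iff).2 ⟨_, hTtop⟩).image c
  have hBsub : ↑B ⊆ ExtL 0 (Set.range (cubeL r 2)) := by
    intro b hb
    rw [Finset.mem_coe, hBdef, Finset.mem_image] at hb
    obtain ⟨y, _, rfl⟩ := hb
    refine ⟨A y.1, hAne y.1 y.2, ?_, rfl⟩
    intro z hz
    rw [Finset.mem_coe, hA, Finset.mem_image] at hz
    obtain ⟨n, _, rfl⟩ := hz
    exact ⟨n, rfl⟩
  have h0 : (combL 1 B hBne) 0 = α := by
    apply FDL.ext'; funext x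
    rw [combL_ne_f 1 0 (by decide) B hBne]
    rw [Bool.eq_iff_iff, bsup_iff]
    constructor
    · rintro ⟨b, hb, hbx⟩
      rw [hBdef, Finset.mem_image] at hb
      obtain ⟨y, _, rfl⟩ := hb
      rw [hc] at hbx
      rw [combL_same_f 0 (A y.1) (hAne y.1 y.2), hA, Finset.inf_image, binf_iff] at hbx
      have hyx : ∀ n, y.1 n ≤ x n := by
        intro n
        have := hbx n
        simp only [Finset.mem_filter, Finset.mem_univ, true_and] at this
        cases hyn : y.1 n
        · exact Bool.false_le _
        · have := this hyn
          simp only [Function.comp] at this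
          exact le_of_eq this.symm
      have hmono := α.mono hyx
      have hyTrue : α.f (↑y) = true := (Finset.mem_filter.mp y.2).2
      cases hx2 : α.f x
      · exfalso
        rw [hyTrue, hx2] at hmono
        exact absurd hmono (by decide)
      · rfl
    · intro hx
      have hxT : x ∈ T := by rw [hT, Finset.mem_filter]; exact ⟨Finset.mem_univ x, hx⟩
      refine ⟨c ⟨x, hxT⟩, ?_, ?_⟩
      · rw [hBdef, Finset.mem_image]; exact ⟨⟨x, hxT⟩, Finset.mem_attach _ _, rfl⟩
      · rw [hc]
        rw [combL_same_f 0 (A x) (hAne x hxT), hA, Finset.inf_image, binf_iff]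
        intro n hn
        simp only [Finset.mem_filter, Finset.mem_univ, true_and] at hn
        exact hn
  have h1 : (combL 1 B hBne) 1 = FDL.dual α := by
    rw [ext1_dual hBne (fun cc hcc => ext0_dual (hBsub hcc)), h0]
  exact ⟨B, hBne, hBsub, by funext i; fin_cases i <;> simp [h0, h1]⟩

lemma minimal_iff_pair {r : ℕ} :
    {b : Fin 2 → FDL r | MinimalL b} = Set.range (fun a : FDL r => ![a, FDL.dual a]) := by
  ext b
  constructor
  · rintro ⟨hg, -⟩
    exact ⟨b 0, (good_dual hg).symm⟩
  · rintro ⟨a, rfl⟩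
    refine ⟨good_pair a, ?_⟩
    intro cc hcc hle
    have hcc' := good_dual hcc
    have hle0 : cc 0 ≤ a := by simpa using hle 0
    have hle1 : cc 1 ≤ FDL.dual a := by simpa using hle 1
    rw [hcc'] at hle1
    simp only [Matrix.cons_val_one, Matrix.head_cons, Matrix.cons_val_zero] at hle1
    have hda : FDL.dual (cc 0) = FDL.dual a :=
      le_antisymm hle1 (FDL.dual_antitone hle0)
    have hca : cc 0 = a := by
      have := congrArg FDL.dual hda
      rwa [FDL.dual_dual, FDL.dual_dual] at this
    rw [hcc', hca]

/-- Dedekind-number interpretation of dimension 2: for every `r ≥ 1`, the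
map `α ↦ (α, α*)` is a bijection from `L[r]` onto the set of minimal bricks of `Λ[r,2]`;
consequently the number of minimal bricks of `Λ[r,2]` equals `card L[r]`, the `r`-th
Dedekind number. -/
theorem statement12 (r : ℕ) (hr : 1 ≤ r) :
    Set.BijOn (fun a : FDL r => ![a, FDL.dual a]) Set.univ
      {b : Fin 2 → FDL r | MinimalL b} ∧
    {b : Fin 2 → FDL r | MinimalL b}.ncard = Nat.card (FDL r) := by
  have hmin := minimal_iff_pair (r := r)
  have hinj : Function.Injective (fun a : FDL r => ![a, FDL.dual a]) := by
    intro a b h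
    have := congrFun h 0
    simpa using this
  constructor
  · rw [hmin]
    exact ⟨fun a _ => Set.mem_range_self a, fun a _ b _ h => hinj h,
      fun b hb => by obtain ⟨a, rfl⟩ := hb; exact ⟨a, Set.mem_univ a, rfl⟩⟩
  · rw [hmin, ← Nat.card_coe_set_eq, Nat.card_range_of_injective hinj]
end
end

section
/- (Tower bound on rank.) Define T : ℕ → ℕ → ℕ by T(0, r) = r and T(k+1, r) = 2^(T(k, r)). Then for every d ≥ 1 and every nonempty finite set P of d-dimensional bricks with card P = r, rank(P) ≤ T(d, r). -/
open scoped Classical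

noncomputable section

/-- The (integer-valued) indicator function of the half-open box
`∏ i, [w i, w i + b i)` in `ℝ^d`, i.e. of the translate by `w` of the brick `b`. -/
def brickInd {d : ℕ} (b : Fin d → ℕ) (w : Fin d → ℝ) (y : Fin d → ℝ) : ℤ :=
  if ∀ i, w i ≤ y i ∧ y i < w i + (b i : ℝ) then 1 else 0

/-- `t` is tilable by the protoset `P`: the indicator function of `t` is an
integer-linear combination of indicator functions of translates of members of `P`. -/
def Tilable {d : ℕ} (P : Set (Fin d → ℕ)) (t : Fin d → ℕ) : Prop :=
  ∃ (m : ℕ) (p : Fin m → (Fin d → ℕ)) (w : Fin m → (Fin d → ℝ)) (γ : Fin m → ℤ),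
    (∀ j, p j ∈ P) ∧
      ∀ y : Fin d → ℝ, brickInd t (fun _ => 0) y = ∑ j, γ j * brickInd (p j) (w j) y

/-- `t` is packable by the protoset `P`: as for tilability but with all coefficients 1. -/
def Packable {d : ℕ} (P : Set (Fin d → ℕ)) (t : Fin d → ℕ) : Prop :=
  ∃ (m : ℕ) (p : Fin m → (Fin d → ℕ)) (w : Fin m → (Fin d → ℝ)),
    (∀ j, p j ∈ P) ∧
      ∀ y : Fin d → ℝ, brickInd t (fun _ => 0) y = ∑ j, brickInd (p j) (w j) y

/-- The divisibility partial order on bricks: `b ⪯ t` iff each sidelength of `b`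
divides the corresponding sidelength of `t`. -/
def BrickLE {d : ℕ} (b t : Fin d → ℕ) : Prop := ∀ i, b i ∣ t i

/-- The set of `⪯`-minimal elements of a set of bricks. -/
def MinOf {d : ℕ} (S : Set (Fin d → ℕ)) : Set (Fin d → ℕ) :=
  {t ∈ S | ∀ s ∈ S, BrickLE s t → s = t}

/-- `M(P)`: the set of `⪯`-minimal bricks among the bricks tilable by `P`. -/
def MSet {d : ℕ} (P : Set (Fin d → ℕ)) : Set (Fin d → ℕ) :=
  MinOf {t | (∀ i, 0 < t i) ∧ Tilable P t}

/-- `rank(P) = card M(P)`. -/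
def brickRank {d : ℕ} (P : Set (Fin d → ℕ)) : ℕ := (MSet P).ncard

/-- `comb_δ(A)`: gcd of the `δ`-th sidelengths, lcm of the others. -/
def combN {d : ℕ} (δ : Fin d) (A : Finset (Fin d → ℕ)) : Fin d → ℕ :=
  fun j => if j = δ then A.gcd (fun b => b δ) else A.lcm (fun b => b j)

/-- `Ext_δ(Q) = { comb_δ(A) : A a nonempty (finite) subset of Q }`. -/
def ExtN {d : ℕ} (δ : Fin d) (Q : Set (Fin d → ℕ)) : Set (Fin d → ℕ) :=
  {b | ∃ A : Finset (Fin d → ℕ), A.Nonempty ∧ ↑A ⊆ Q ∧ b = combN δ A}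

/-- `Ext_{1..d}(Q) = Ext_d (Ext_{d-1} (⋯ (Ext_1 Q) ⋯))`. -/
def ExtAllN {d : ℕ} (Q : Set (Fin d → ℕ)) : Set (Fin d → ℕ) :=
  (List.finRange d).foldl (fun S δ => ExtN δ S) Q

/-- The tower function: `T(0,r) = r`, `T(k+1,r) = 2^(T(k,r))`. -/
def tower : ℕ → ℕ → ℕ
  | 0, r => r
  | k + 1, r => 2 ^ tower k r

namespace Statement13Aux

open MeasureTheory Complex

variable {d : ℕ}

/-! ### One-dimensional indicators -/

/-- 1D integer indicator of `[u, u+n)`. -/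
def ind1 (n : ℕ) (u x : ℝ) : ℤ := if u ≤ x ∧ x < u + n then 1 else 0

lemma brickInd_eq_prod (b : Fin d → ℕ) (w y : Fin d → ℝ) :
    brickInd b w y = ∏ i, ind1 (b i) (w i) (y i) := by
  unfold brickInd ind1
  by_cases h : ∀ i, w i ≤ y i ∧ y i < w i + (b i : ℝ)
  · rw [if_pos h, Finset.prod_eq_one]
    intro i _; rw [if_pos (h i)]
  · rw [if_neg h]
    obtain ⟨i, hi⟩ := not_forall.mp h
    exact (Finset.prod_eq_zero (Finset.mem_univ i) (by rw [if_neg hi])).symm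

lemma ind1_concat (x y : ℕ) (u v : ℝ) :
    ind1 (x + y) u v = ind1 x u v + ind1 y (u + x) v := by
  unfold ind1
  have hx : (0:ℝ) ≤ x := Nat.cast_nonneg x
  have hy : (0:ℝ) ≤ y := Nat.cast_nonneg y
  push_cast
  by_cases h2 : u ≤ v ∧ v < u + (x:ℝ)
  · rw [if_pos h2, if_pos ⟨h2.1, by linarith [h2.2]⟩,
      if_neg (by push_neg; intro hc; linarith [h2.2])]
    norm_num
  · by_cases h3 : u + (x:ℝ) ≤ v ∧ v < u + (x:ℝ) + (y:ℝ)
    · rw [if_pos ⟨by linarith [h3.1], by linarith [h3.2]⟩, if_neg h2, if_pos h3]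
      norm_num
    · have hneg : ¬ (u ≤ v ∧ v < u + ((x:ℝ) + (y:ℝ))) := by
        intro hc
        rcases lt_or_ge v (u + (x:ℝ)) with hv | hv
        · exact h2 ⟨hc.1, hv⟩
        · exact h3 ⟨hv, by linarith [hc.2]⟩
      rw [if_neg h2, if_neg h3, if_neg hneg]
      norm_num

lemma brickInd_concat (b : Fin d → ℕ) (δ : Fin d) (x y : ℕ) (w : Fin d → ℝ) :
    brickInd (Function.update b δ (x + y)) w
      = brickInd (Function.update b δ x) w
        + brickInd (Function.update b δ y) (Function.update w δ (w δ + x)) := by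
  funext v
  show (_ : ℤ) = (_ : ℤ) + _
  rw [brickInd_eq_prod, brickInd_eq_prod, brickInd_eq_prod,
    ← Finset.mul_prod_erase Finset.univ _ (Finset.mem_univ δ),
    ← Finset.mul_prod_erase Finset.univ _ (Finset.mem_univ δ),
    ← Finset.mul_prod_erase Finset.univ _ (Finset.mem_univ δ)]
  have hR : ∀ (c : ℕ) (u : ℝ),
      (∏ i ∈ Finset.univ.erase δ,
        ind1 (Function.update b δ c i) (Function.update w δ u i) (v i))
      = ∏ i ∈ Finset.univ.erase δ, ind1 (b i) (w i) (v i) := by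
    intro c u
    refine Finset.prod_congr rfl fun i hi => ?_
    have hne : i ≠ δ := (Finset.mem_erase.mp hi).1
    rw [Function.update_of_ne hne, Function.update_of_ne hne]
  have hR2 : (∏ i ∈ Finset.univ.erase δ, ind1 (Function.update b δ x i) (w i) (v i))
      = ∏ i ∈ Finset.univ.erase δ, ind1 (b i) (w i) (v i) := by
    refine Finset.prod_congr rfl fun i hi => ?_
    rw [Function.update_of_ne (Finset.mem_erase.mp hi).1]
  have hR3 : (∏ i ∈ Finset.univ.erase δ, ind1 (Function.update b δ (x + y) i) (w i) (v i))
      = ∏ i ∈ Finset.univ.erase δ, ind1 (b i) (w i) (v i) := by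
    refine Finset.prod_congr rfl fun i hi => ?_
    rw [Function.update_of_ne (Finset.mem_erase.mp hi).1]
  rw [hR y (w δ + x), hR2, hR3]
  simp only [Function.update_self]
  rw [ind1_concat]
  ring

/-! ### The span of translates of protobricks -/

/-- The `ℤ`-module of signed tilings by translates of members of `P`. -/
def sp (P : Set (Fin d → ℕ)) : Submodule ℤ ((Fin d → ℝ) → ℤ) :=
  Submodule.span ℤ {f | ∃ b ∈ P, ∃ w, f = brickInd b w}

lemma mem_sp_of {P : Set (Fin d → ℕ)} {b : Fin d → ℕ} (hb : b ∈ P) (w : Fin d → ℝ) :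
    brickInd b w ∈ sp P :=
  Submodule.subset_span ⟨b, hb, w, rfl⟩

/-- membership of all translates of a given brick shape, as a predicate on the `δ`-side. -/
def GS (P : Set (Fin d → ℕ)) (b : Fin d → ℕ) (δ : Fin d) (x : ℕ) : Prop :=
  ∀ w, brickInd (Function.update b δ x) w ∈ sp P

lemma GS_zero {P : Set (Fin d → ℕ)} {b : Fin d → ℕ} {δ : Fin d} : GS P b δ 0 := by
  intro w
  have h0 : brickInd (Function.update b δ 0) w = 0 := by
    funext v
    have hneg : ¬ ∀ i, w i ≤ v i ∧ v i < w i + ((Function.update b δ 0 i : ℕ) : ℝ) := by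
      intro h
      have := h δ
      rw [Function.update_self] at this
      push_cast at this
      linarith [this.1, this.2]
    show (if ∀ i, w i ≤ v i ∧ v i < w i + ((Function.update b δ 0 i : ℕ) : ℝ) then (1:ℤ) else 0) = _
    rw [if_neg hneg]
    rfl
  rw [h0]
  exact (sp P).zero_mem

lemma GS_add {P : Set (Fin d → ℕ)} {b : Fin d → ℕ} {δ : Fin d} {x y : ℕ}
    (hx : GS P b δ x) (hy : GS P b δ y) : GS P b δ (x + y) := by
  intro w
  rw [brickInd_concat]
  exact (sp P).add_mem (hx w) (hy _)

lemma GS_sub {P : Set (Fin d → ℕ)} {b : Fin d → ℕ} {δ : Fin d} {x y : ℕ}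
    (hxy : GS P b δ (x + y)) (hx : GS P b δ x) : GS P b δ y := by
  intro w''
  set w : Fin d → ℝ := Function.update w'' δ (w'' δ - x) with hw
  have key : Function.update w δ (w δ + (x:ℝ)) = w'' := by
    funext i
    by_cases hi : i = δ
    · subst hi
      rw [Function.update_self, hw, Function.update_self]
      ring_nf
    · rw [Function.update_of_ne hi, hw, Function.update_of_ne hi]
  have h := brickInd_concat b δ x y w
  have : brickInd (Function.update b δ y) w''
      = brickInd (Function.update b δ (x + y)) w - brickInd (Function.update b δ x) w := by
    rw [h, ← key]; abel
  rw [this]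
  exact (sp P).sub_mem (hxy w) (hx w)

lemma GS_mul {P : Set (Fin d → ℕ)} {b : Fin d → ℕ} {δ : Fin d} {x : ℕ}
    (hx : GS P b δ x) (k : ℕ) : GS P b δ (k * x) := by
  induction k with
  | zero => simpa using (GS_zero : GS P b δ 0)
  | succ k ih =>
      have : (k + 1) * x = k * x + x := by ring
      rw [this]
      exact GS_add ih hx

lemma GS_gcd {P : Set (Fin d → ℕ)} {b : Fin d → ℕ} {δ : Fin d} :
    ∀ x, GS P b δ x → ∀ y, GS P b δ y → GS P b δ (Nat.gcd x y) := by
  intro x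
  induction x using Nat.strong_induction_on with
  | _ x ih =>
    intro hx y hy
    rcases Nat.eq_zero_or_pos x with h0 | hxpos
    · subst h0; rw [Nat.gcd_zero_left]; exact hy
    · rw [Nat.gcd_rec x y]
      have hmod : GS P b δ (y % x) := by
        have hdm : x * (y / x) + y % x = y := Nat.div_add_mod y x
        have hmul : GS P b δ (x * (y / x)) := by
          rw [mul_comm]; exact GS_mul hx _
        exact GS_sub (by rw [hdm]; exact hy) hmul
      exact ih (y % x) (Nat.mod_lt y hxpos) hmod x hx

lemma GS_finsetGcd {P : Set (Fin d → ℕ)} {b : Fin d → ℕ} {δ : Fin d}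
    {β : Type*} (A : Finset β) (f : β → ℕ) (h : ∀ a ∈ A, GS P b δ (f a)) :
    GS P b δ (A.gcd f) := by
  classical
  induction A using Finset.induction_on with
  | empty => simpa [Finset.gcd_empty] using (GS_zero : GS P b δ 0)
  | insert _ _ hni ih =>
      rw [Finset.gcd_insert]
      exact GS_gcd _ (h _ (Finset.mem_insert_self _ _))
        _ (ih fun a ha => h a (Finset.mem_insert_of_mem ha))

lemma sp_update {P : Set (Fin d → ℕ)} {b : Fin d → ℕ} (j : Fin d) {n : ℕ}
    (hb : ∀ w, brickInd b w ∈ sp P) (hdvd : b j ∣ n) :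
    ∀ w, brickInd (Function.update b j n) w ∈ sp P := by
  obtain ⟨k, rfl⟩ := hdvd
  have hbj : GS P b j (b j) := by
    intro w
    rw [Function.update_eq_self]
    exact hb w
  have := GS_mul hbj k
  rw [mul_comm] at this
  exact this

lemma sp_upMany {P : Set (Fin d → ℕ)} {b c : Fin d → ℕ}
    (hdvd : ∀ j, b j ∣ c j) (hb : ∀ w, brickInd b w ∈ sp P) (s : Finset (Fin d)) :
    ∀ w, brickInd (fun i => if i ∈ s then c i else b i) w ∈ sp P := by
  classical
  induction s using Finset.induction_on with
  | empty => simpa using hb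
  | @insert j s' hj ih =>
      have heq : (fun i => if i ∈ insert j s' then c i else b i)
          = Function.update (fun i => if i ∈ s' then c i else b i) j (c j) := by
        funext i
        by_cases h : i = j
        · subst h; simp [Function.update_self, hj]
        · simp [Function.update_of_ne h, Finset.mem_insert, h]
      rw [heq]
      refine sp_update j ih ?_
      simpa [hj] using hdvd j

lemma sp_comb {P : Set (Fin d → ℕ)} (δ : Fin d) (A : Finset (Fin d → ℕ))
    (h : ∀ a ∈ A, ∀ w, brickInd a w ∈ sp P) :
    ∀ w, brickInd (combN δ A) w ∈ sp P := by
  classical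
  set L : Fin d → ℕ := fun i => A.lcm (fun b => b i) with hL
  set c₀ : Fin d → ℕ := fun i => if i = δ then 0 else L i with hc₀
  have hGS : ∀ a ∈ A, GS P c₀ δ (a δ) := by
    intro a ha w
    have h1 := sp_upMany (b := a) (c := L)
      (fun j => Finset.dvd_lcm ha) (h a ha) (Finset.univ.erase δ)
    have heq : Function.update c₀ δ (a δ)
        = fun i => if i ∈ Finset.univ.erase δ then L i else a i := by
      funext i
      by_cases hi : i = δ
      · subst hi; simp [Function.update_self, Finset.mem_erase]
      · simp [Function.update_of_ne hi, hc₀, hi, Finset.mem_erase]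
    rw [heq]
    exact h1 w
  have hg : GS P c₀ δ (A.gcd fun b => b δ) := GS_finsetGcd A _ hGS
  intro w
  have heq2 : combN δ A = Function.update c₀ δ (A.gcd fun b => b δ) := by
    funext i
    by_cases hi : i = δ
    · subst hi; simp [combN, Function.update_self]
    · simp [combN, Function.update_of_ne hi, hc₀, hi, hL]
  rw [heq2]
  exact hg w

lemma tilable_of_sp {P : Set (Fin d → ℕ)} {t : Fin d → ℕ}
    (h : brickInd t (fun _ => 0) ∈ sp P) : Tilable P t := by
  classical
  rw [sp, Submodule.mem_span_set] at h
  obtain ⟨c, hsupp, hsum⟩ := h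
  set m := c.support.card with hm
  have e : Fin m ≃ ↥c.support :=
    (Fintype.equivFinOfCardEq (Fintype.card_coe c.support)).symm
  have hS : ∀ j : Fin m, ∃ b, b ∈ P ∧ ∃ w, ((e j : ((Fin d → ℝ) → ℤ))) = brickInd b w := by
    intro j
    obtain ⟨b, hb, w, hw⟩ := hsupp (e j).2
    exact ⟨b, hb, w, hw⟩
  choose p hp w hw using hS
  refine ⟨m, p, w, fun j => c (e j), hp, fun y => ?_⟩
  have h1 : brickInd t (fun _ => 0) y = ∑ f ∈ c.support, c f * f y := by
    rw [← hsum]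
    rw [Finsupp.sum]
    rw [Finset.sum_apply]
    exact Finset.sum_congr rfl fun f _ => rfl
  rw [h1]
  have h2 : ∑ j : Fin m, c (e j) * brickInd (p j) (w j) y
      = ∑ a : ↥c.support, c a * (a : ((Fin d → ℝ) → ℤ)) y := by
    rw [← Equiv.sum_comp e (fun a : ↥c.support => c a * (a : ((Fin d → ℝ) → ℤ)) y)]
    exact Finset.sum_congr rfl fun j _ => by rw [← hw j]
  rw [h2, Finset.sum_coe_sort c.support (fun f => c f * f y)]

end Statement13Aux
namespace Statement13Aux

open MeasureTheory Complex

variable {d : ℕ}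

/-! ### The Fourier obstruction -/

/-- frequency constant -/
def cc (a : ℝ) : ℂ := 2 * (Real.pi : ℂ) * Complex.I * (a : ℂ)

lemma cc_ne_zero {a : ℝ} (ha : a ≠ 0) : cc a ≠ 0 := by
  unfold cc
  simp only [ne_eq, mul_eq_zero, Complex.I_ne_zero, or_false, Complex.ofReal_eq_zero,
    OfNat.ofNat_ne_zero, false_or, not_or]
  exact ⟨by simp [Complex.ofReal_ne_zero, Real.pi_ne_zero], ha⟩

/-- value of `∫ e^{2πi a x}` over `[u, u+n)`. -/
def I1 (n : ℕ) (u a : ℝ) : ℂ :=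
  if a = 0 then (n : ℂ)
  else (Complex.exp (cc a * ((u + n : ℝ) : ℂ)) - Complex.exp (cc a * (u : ℂ))) / cc a

lemma ind1_mul_eq_indicator (n : ℕ) (u a : ℝ) :
    (fun x : ℝ => (ind1 n u x : ℂ) * Complex.exp (cc a * (x : ℂ)))
      = (Set.Ico u (u + (n:ℝ))).indicator (fun x : ℝ => Complex.exp (cc a * (x : ℂ))) := by
  funext x
  unfold ind1
  by_cases h : u ≤ x ∧ x < u + n
  · rw [if_pos h, Set.indicator_of_mem (Set.mem_Ico.mpr h)]
    norm_num
  · rw [if_neg h, Set.indicator_of_notMem (fun hc => h (Set.mem_Ico.mp hc))]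
    norm_num

lemma integrable1 (n : ℕ) (u a : ℝ) :
    Integrable (fun x : ℝ => (ind1 n u x : ℂ) * Complex.exp (cc a * (x : ℂ))) := by
  rw [ind1_mul_eq_indicator, integrable_indicator_iff measurableSet_Ico]
  exact ((Complex.continuous_exp.comp
    (continuous_const.mul Complex.continuous_ofReal)).integrableOn_Icc).mono_set
    Set.Ico_subset_Icc_self

lemma integral1 (n : ℕ) (u a : ℝ) :
    ∫ x : ℝ, (ind1 n u x : ℂ) * Complex.exp (cc a * (x : ℂ)) = I1 n u a := by
  rw [ind1_mul_eq_indicator, integral_indicator measurableSet_Ico]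
  have hle : u ≤ u + (n:ℝ) := by linarith [Nat.cast_nonneg (α := ℝ) n]
  rw [integral_Ico_eq_integral_Ioo, ← integral_Ioc_eq_integral_Ioo,
    ← intervalIntegral.integral_of_le hle]
  by_cases ha : a = 0
  · subst ha
    simp only [cc, Complex.ofReal_zero, mul_zero, zero_mul, Complex.exp_zero, mul_one,
      intervalIntegral.integral_const, I1, if_pos rfl]
    rw [add_sub_cancel_left]
    simp [Complex.real_smul]
  · rw [integral_exp_mul_complex (cc_ne_zero ha), I1, if_neg ha]

lemma I1_eq_zero {n : ℕ} {u a : ℝ} (ha : a ≠ 0) (h : ∃ k : ℤ, a * n = (k : ℝ)) :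
    I1 n u a = 0 := by
  obtain ⟨k, hk⟩ := h
  rw [I1, if_neg ha, div_eq_zero_iff]
  left
  rw [sub_eq_zero, Complex.ofReal_add, mul_add, Complex.exp_add]
  have h2 : cc a * ((n : ℝ) : ℂ) = (k : ℂ) * (2 * (Real.pi : ℂ) * Complex.I) := by
    have h3 : ((a * n : ℝ) : ℂ) = (k : ℂ) := by exact_mod_cast congrArg Complex.ofReal hk
    push_cast at h3 ⊢
    unfold cc
    linear_combination (2 * (Real.pi : ℂ) * Complex.I) * h3
  rw [h2, Complex.exp_int_mul_two_pi_mul_I, mul_one]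

lemma of_I1_eq_zero {n : ℕ} {u a : ℝ} (hn : 0 < n) (h : I1 n u a = 0) :
    a ≠ 0 ∧ ∃ k : ℤ, a * n = (k : ℝ) := by
  by_cases ha : a = 0
  · exfalso
    rw [I1, if_pos ha] at h
    exact (Nat.cast_ne_zero.mpr hn.ne').elim (by exact_mod_cast h)
  refine ⟨ha, ?_⟩
  rw [I1, if_neg ha, div_eq_zero_iff] at h
  rcases h with h | h
  · rw [sub_eq_zero] at h
    have h2 : Complex.exp (cc a * ((u + (n:ℝ) : ℝ) : ℂ))
        = Complex.exp (cc a * (u : ℂ)) * Complex.exp (cc a * ((n:ℝ) : ℂ)) := by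
      rw [← Complex.exp_add]
      congr 1
      push_cast
      ring
    rw [h2] at h
    have hne : Complex.exp (cc a * (u : ℂ)) ≠ 0 := Complex.exp_ne_zero _
    have h3 : Complex.exp (cc a * ((n:ℝ) : ℂ)) = 1 := by
      have := mul_left_cancel₀ hne (h.trans (mul_one _).symm)
      exact this
    rw [Complex.exp_eq_one_iff] at h3
    obtain ⟨k, hk⟩ := h3
    refine ⟨k, ?_⟩
    have h2pi : (2 * (Real.pi : ℂ) * Complex.I) ≠ 0 := by
      simp [Real.pi_ne_zero, Complex.I_ne_zero, Complex.ofReal_ne_zero]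
    have h4 : ((a * n : ℝ) : ℂ) = (k : ℂ) := by
      apply mul_left_cancel₀ h2pi
      push_cast
      unfold cc at hk
      push_cast at hk
      linear_combination hk
    exact_mod_cast h4
  · exact absurd h (cc_ne_zero ha)

lemma brick_char_eq (b : Fin d → ℕ) (w α : Fin d → ℝ) :
    (fun y : Fin d → ℝ => (brickInd b w y : ℂ) * ∏ i, Complex.exp (cc (α i) * ((y i : ℝ) : ℂ)))
      = fun y => ∏ i, ((ind1 (b i) (w i) (y i) : ℂ) * Complex.exp (cc (α i) * ((y i : ℝ) : ℂ))) := by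
  funext y
  rw [brickInd_eq_prod]
  push_cast
  rw [Finset.prod_mul_distrib]

lemma integrable_brick (b : Fin d → ℕ) (w α : Fin d → ℝ) :
    Integrable (fun y : Fin d → ℝ =>
      (brickInd b w y : ℂ) * ∏ i, Complex.exp (cc (α i) * ((y i : ℝ) : ℂ))) := by
  rw [brick_char_eq]
  exact Integrable.fin_nat_prod (fun i => integrable1 _ _ _)

lemma integral_brick (b : Fin d → ℕ) (w α : Fin d → ℝ) :
    ∫ y : Fin d → ℝ, ((brickInd b w y : ℂ) * ∏ i, Complex.exp (cc (α i) * ((y i : ℝ) : ℂ)))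
      = ∏ i, I1 (b i) (w i) (α i) := by
  rw [brick_char_eq]
  rw [MeasureTheory.integral_fintype_prod_volume_eq_prod
    (f := fun i x => (ind1 (b i) (w i) x : ℂ) * Complex.exp (cc (α i) * (x : ℂ)))]
  exact Finset.prod_congr rfl fun i _ => integral1 _ _ _

lemma lemB {t : Fin d → ℕ} (ht : ∀ i, 0 < t i) {m : ℕ} {p : Fin m → Fin d → ℕ}
    {w : Fin m → Fin d → ℝ} {γ : Fin m → ℤ}
    (hid : ∀ y, brickInd t (fun _ => 0) y = ∑ j, γ j * brickInd (p j) (w j) y)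
    (α : Fin d → ℝ) (hcov : ∀ j, ∃ i, α i ≠ 0 ∧ ∃ k : ℤ, α i * (p j i : ℝ) = (k : ℝ)) :
    ∃ i, α i ≠ 0 ∧ ∃ k : ℤ, α i * (t i : ℝ) = (k : ℝ) := by
  have key : ∏ i, I1 (t i) ((fun _ => (0:ℝ)) i) (α i) = 0 := by
    have h1 : ∏ i, I1 (t i) ((fun _ => (0:ℝ)) i) (α i)
        = ∫ y : Fin d → ℝ, ((brickInd t (fun _ => 0) y : ℂ)
            * ∏ i, Complex.exp (cc (α i) * ((y i : ℝ) : ℂ))) :=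
      (integral_brick t (fun _ => 0) α).symm
    have h2 : (fun y : Fin d → ℝ => ((brickInd t (fun _ => 0) y : ℂ)
            * ∏ i, Complex.exp (cc (α i) * ((y i : ℝ) : ℂ))))
        = fun y => ∑ j, (γ j : ℂ) * ((brickInd (p j) (w j) y : ℂ)
            * ∏ i, Complex.exp (cc (α i) * ((y i : ℝ) : ℂ))) := by
      funext y
      rw [hid y]
      push_cast
      rw [Finset.sum_mul]
      exact Finset.sum_congr rfl fun j _ => by ring
    rw [h1, h2, integral_finset_sum _ (fun j _ => (integrable_brick (p j) (w j) α).const_mul _)]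
    refine Finset.sum_eq_zero fun j _ => ?_
    rw [MeasureTheory.integral_const_mul, integral_brick]
    obtain ⟨i, hi, hk⟩ := hcov j
    rw [Finset.prod_eq_zero (Finset.mem_univ i) (I1_eq_zero hi hk), mul_zero]
  obtain ⟨i, _, hI⟩ := Finset.prod_eq_zero_iff.mp key
  obtain ⟨h1, h2⟩ := of_I1_eq_zero (ht i) hI
  exact ⟨i, h1, h2⟩

end Statement13Aux
namespace Statement13Aux

variable {d : ℕ}

/-! ### Number theory helpers -/

lemma exists_pp {a b : ℕ} (ha : 0 < a) (hb : 0 < b) (h : ¬ a ∣ b) :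
    ∃ p e : ℕ, p.Prime ∧ 0 < e ∧ p ^ e ∣ a ∧ ¬ p ^ e ∣ b := by
  have hle : ¬ a.factorization ≤ b.factorization := fun hc =>
    h ((Nat.factorization_le_iff_dvd ha.ne' hb.ne').mp hc)
  rw [Finsupp.le_def] at hle
  push_neg at hle
  obtain ⟨p, hp⟩ := hle
  have hpp : p.Prime := by
    have hmem : p ∈ a.factorization.support := Finsupp.mem_support_iff.mpr (by omega)
    rw [Nat.support_factorization] at hmem
    exact Nat.prime_of_mem_primeFactors hmem
  refine ⟨p, a.factorization p, hpp, by omega, Nat.ordProj_dvd a p, ?_⟩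
  intro hc
  have := (Nat.Prime.pow_dvd_iff_le_factorization hpp hb.ne').mp hc
  omega

lemma pp_dvd_lcm2 {p e x y : ℕ} (hp : p.Prime) (h : p ^ e ∣ Nat.lcm x y) :
    p ^ e ∣ x ∨ p ^ e ∣ y := by
  rcases Nat.eq_zero_or_pos x with hx | hx
  · left; simp [hx]
  rcases Nat.eq_zero_or_pos y with hy | hy
  · right; simp [hy]
  have hl : Nat.lcm x y ≠ 0 := Nat.lcm_ne_zero hx.ne' hy.ne'
  have h2 := (hp.pow_dvd_iff_le_factorization hl).mp h
  rw [Nat.factorization_lcm hx.ne' hy.ne', Finsupp.sup_apply] at h2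
  rcases le_sup_iff.mp h2 with hc | hc
  · exact Or.inl ((hp.pow_dvd_iff_le_factorization hx.ne').mpr hc)
  · exact Or.inr ((hp.pow_dvd_iff_le_factorization hy.ne').mpr hc)

lemma pp_dvd_lcm {β : Type*} {p e : ℕ} (hp : p.Prime) (he : 0 < e)
    (A : Finset β) (f : β → ℕ) (h : p ^ e ∣ A.lcm f) : ∃ a ∈ A, p ^ e ∣ f a := by
  classical
  induction A using Finset.induction_on with
  | empty =>
      exfalso
      rw [Finset.lcm_empty] at h
      have h1 : p ^ e = 1 := Nat.dvd_one.mp h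
      have h2 : 1 < p ^ e := Nat.one_lt_pow he.ne' hp.one_lt
      omega
  | @insert a s ha ih =>
      rw [Finset.lcm_insert] at h
      rcases pp_dvd_lcm2 hp (show p ^ e ∣ Nat.lcm (f a) (s.lcm f) from h) with h | h
      · exact ⟨a, Finset.mem_insert_self _ _, h⟩
      · obtain ⟨x, hx, hx2⟩ := ih h
        exact ⟨x, Finset.mem_insert_of_mem hx, hx2⟩

/-! ### The oracle -/

/-- The de Bruijn-type covering obstruction satisfied by any set `Q` such that
`t` is tilable using bricks from `Q`. -/
def Oracle (t : Fin d → ℕ) (Q : Finset (Fin d → ℕ)) : Prop :=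
  ∀ (D : Finset (Fin d)) (g : Fin d → ℕ), (∀ i ∈ D, 0 < g i) →
    (∀ b ∈ Q, ∃ i ∈ D, g i ∣ b i) → ∃ i ∈ D, g i ∣ t i

lemma oracle_base {t : Fin d → ℕ} (ht : ∀ i, 0 < t i) {P : Finset (Fin d → ℕ)}
    (htil : Tilable ↑P t) : Oracle t P := by
  obtain ⟨m, p, w, γ, hp, hid⟩ := htil
  intro D g hgpos hcov
  classical
  set α : Fin d → ℝ := fun i => if i ∈ D then ((g i : ℝ))⁻¹ else 0 with hα
  have hcov' : ∀ j, ∃ i, α i ≠ 0 ∧ ∃ k : ℤ, α i * (p j i : ℝ) = (k : ℝ) := by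
    intro j
    obtain ⟨i, hiD, hdvd⟩ := hcov (p j) (hp j)
    obtain ⟨c, hc⟩ := hdvd
    have hg0 : (0:ℝ) < g i := by exact_mod_cast hgpos i hiD
    refine ⟨i, ?_, ⟨(c : ℤ), ?_⟩⟩
    · rw [hα]; simp only [if_pos hiD]; exact inv_ne_zero hg0.ne'
    · rw [hα]; simp only [if_pos hiD]
      rw [hc]
      push_cast
      field_simp
  obtain ⟨i, hi0, k, hk⟩ := lemB ht hid α hcov'
  have hiD : i ∈ D := by
    by_contra hiD
    rw [hα] at hi0
    simp [if_neg hiD] at hi0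
  refine ⟨i, hiD, ?_⟩
  rw [hα] at hk
  simp only [if_pos hiD] at hk
  have hg0 : (0:ℝ) < g i := by exact_mod_cast hgpos i hiD
  have hne : (g i : ℝ) ≠ 0 := hg0.ne'
  field_simp at hk
  have hZ : (t i : ℤ) = k * (g i : ℤ) := by exact_mod_cast hk.trans (mul_comm _ _)
  have : ((g i : ℕ) : ℤ) ∣ ((t i : ℕ) : ℤ) := Dvd.intro_left k hZ.symm
  exact_mod_cast this

lemma oracle_step {t : Fin d → ℕ} (ht : ∀ i, 0 < t i) (δ : Fin d)
    {Q : Finset (Fin d → ℕ)} (hQne : Q.Nonempty) (hQpos : ∀ b ∈ Q, ∀ i, 0 < b i)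
    (hO : Oracle t Q) :
    ∃ Q' : Finset (Fin d → ℕ), Q'.Nonempty ∧ Oracle t Q' ∧
      (∀ s ∈ Q', ∃ A : Finset (Fin d → ℕ), A.Nonempty ∧ A ⊆ Q ∧ s = combN δ A) ∧
      (∀ s ∈ Q', s δ ∣ t δ) := by
  classical
  set 𝔄 : Finset (Finset (Fin d → ℕ)) :=
    Q.powerset.filter (fun A => A.Nonempty ∧ A.gcd (fun b => b δ) ∣ t δ) with h𝔄
  have hrep : ∀ s ∈ 𝔄.image (combN δ),
      ∃ A : Finset (Fin d → ℕ), A.Nonempty ∧ A ⊆ Q ∧ s = combN δ A := by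
    intro s hs
    obtain ⟨A, hA, rfl⟩ := Finset.mem_image.mp hs
    obtain ⟨hA1, hA2, _⟩ := Finset.mem_filter.mp hA
    exact ⟨A, hA2, Finset.mem_powerset.mp hA1, rfl⟩
  have hdel : ∀ s ∈ 𝔄.image (combN δ), s δ ∣ t δ := by
    intro s hs
    obtain ⟨A, hA, rfl⟩ := Finset.mem_image.mp hs
    obtain ⟨_, _, hA3⟩ := Finset.mem_filter.mp hA
    simpa [combN] using hA3
  refine ⟨𝔄.image (combN δ), ?_, ?_, hrep, hdel⟩
  · -- nonempty : Q itself belongs to 𝔄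
    have hQg : Q.gcd (fun b => b δ) ∣ t δ := by
      have hpos : ∀ i ∈ ({δ} : Finset (Fin d)), 0 < (fun _ => Q.gcd (fun b => b δ)) i := by
        intro i _
        obtain ⟨b0, hb0⟩ := hQne
        exact Nat.pos_of_dvd_of_pos (Finset.gcd_dvd hb0) (hQpos b0 hb0 δ)
      have hcv : ∀ b ∈ Q, ∃ i ∈ ({δ} : Finset (Fin d)),
          (fun _ => Q.gcd (fun b => b δ)) i ∣ b i := by
        intro b hb
        exact ⟨δ, Finset.mem_singleton_self δ, Finset.gcd_dvd hb⟩
      obtain ⟨i, hi, hdvd⟩ := hO {δ} _ hpos hcv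
      have hieq := Finset.mem_singleton.mp hi
      subst hieq
      exact hdvd
    exact ⟨combN δ Q, Finset.mem_image_of_mem _
      (Finset.mem_filter.mpr ⟨Finset.mem_powerset.mpr le_rfl, hQne, hQg⟩)⟩
  · -- the oracle survives
    intro D g hgpos hcov
    by_contra hcon
    push_neg at hcon
    have hqex : ∀ i : Fin d, ∃ q : ℕ, i ∈ D →
        (∃ p e, p.Prime ∧ 0 < e ∧ q = p ^ e) ∧ q ∣ g i ∧ ¬ q ∣ t i := by
      intro i
      by_cases hi : i ∈ D
      · obtain ⟨p, e, hp, he, h1, h2⟩ := exists_pp (hgpos i hi) (ht i) (hcon i hi)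
        exact ⟨p ^ e, fun _ => ⟨⟨p, e, hp, he, rfl⟩, h1, h2⟩⟩
      · exact ⟨1, fun h => absurd h hi⟩
    choose q hq using hqex
    have hqpos : ∀ i ∈ D.erase δ, 0 < q i := fun i hi =>
      Nat.pos_of_dvd_of_pos ((hq i (Finset.mem_of_mem_erase hi)).2.1)
        (hgpos i (Finset.mem_of_mem_erase hi))
    set B : Finset (Fin d → ℕ) := Q.filter (fun b => ∀ i ∈ D.erase δ, ¬ q i ∣ b i) with hB
    rcases B.eq_empty_or_nonempty with hBe | hBne
    · have hcov2 : ∀ b ∈ Q, ∃ i ∈ D.erase δ, q i ∣ b i := by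
        intro b hb
        by_contra hc
        push_neg at hc
        have hbB : b ∈ B := Finset.mem_filter.mpr ⟨hb, hc⟩
        rw [hBe] at hbB
        exact absurd hbB (Finset.notMem_empty b)
      obtain ⟨i, hi, hdvd⟩ := hO (D.erase δ) q hqpos hcov2
      exact (hq i (Finset.mem_of_mem_erase hi)).2.2 hdvd
    · set h0 : ℕ := B.gcd (fun b => b δ) with hh0
      have hBQ : B ⊆ Q := Finset.filter_subset _ _
      have hh0pos : 0 < h0 := by
        obtain ⟨b0, hb0⟩ := hBne
        exact Nat.pos_of_dvd_of_pos (Finset.gcd_dvd hb0) (hQpos b0 (hBQ hb0) δ)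
      have hpos2 : ∀ i ∈ insert δ (D.erase δ), 0 < (fun i => if i = δ then h0 else q i) i := by
        intro i hi
        rcases Finset.mem_insert.mp hi with hiδ | hi'
        · subst hiδ; simpa using hh0pos
        · have hne2 : i ≠ δ := (Finset.mem_erase.mp hi').1
          simpa [hne2] using hqpos i hi'
      have hcov2 : ∀ b ∈ Q, ∃ i ∈ insert δ (D.erase δ),
          (fun i => if i = δ then h0 else q i) i ∣ b i := by
        intro b hb
        by_cases hbB : b ∈ B
        · exact ⟨δ, Finset.mem_insert_self _ _, by
            simpa using Finset.gcd_dvd hbB⟩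
        · have hc : ¬ ∀ i ∈ D.erase δ, ¬ q i ∣ b i := fun hcc =>
            hbB (Finset.mem_filter.mpr ⟨hb, hcc⟩)
          push_neg at hc
          obtain ⟨i, hiD, hdvd⟩ := hc
          exact ⟨i, Finset.mem_insert_of_mem hiD, by
            simpa [(Finset.mem_erase.mp hiD).1] using hdvd⟩
      obtain ⟨i, hi, hdvd⟩ := hO (insert δ (D.erase δ)) _ hpos2 hcov2
      rcases Finset.mem_insert.mp hi with hiδ | hi'
      · -- h0 ∣ t δ, so B ∈ 𝔄, contradiction via the cover of Q'
        have hdvd2 : h0 ∣ t δ := by rw [hiδ] at hdvd; simpa using hdvd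
        have hBin : B ∈ 𝔄 := Finset.mem_filter.mpr ⟨Finset.mem_powerset.mpr hBQ, hBne, hdvd2⟩
        obtain ⟨i2, hi2D, hgd⟩ := hcov (combN δ B) (Finset.mem_image_of_mem _ hBin)
        by_cases h2δ : i2 = δ
        · apply hcon i2 hi2D
          have hcomb : combN δ B i2 = h0 := by rw [h2δ]; simp [combN, hh0]
          rw [hcomb] at hgd
          rw [h2δ] at hgd ⊢
          exact dvd_trans hgd hdvd2
        · have hcomb : combN δ B i2 = B.lcm (fun b => b i2) := by simp [combN, h2δ]
          rw [hcomb] at hgd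
          obtain ⟨⟨p, e, hp, he, hqe⟩, hqg, _⟩ := hq i2 hi2D
          have hqlcm : q i2 ∣ B.lcm (fun b => b i2) := dvd_trans hqg hgd
          rw [hqe] at hqlcm
          obtain ⟨b0, hb0, hpb⟩ := pp_dvd_lcm hp he B _ hqlcm
          have hfil := (Finset.mem_filter.mp hb0).2 i2 (Finset.mem_erase.mpr ⟨h2δ, hi2D⟩)
          rw [hqe] at hfil
          exact hfil hpb
      · have hne2 : i ≠ δ := (Finset.mem_erase.mp hi').1
        have hdvd2 : q i ∣ t i := by simpa [hne2] using hdvd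
        exact (hq i (Finset.mem_of_mem_erase hi')).2.2 hdvd2

end Statement13Aux
namespace Statement13Aux

variable {d : ℕ}

lemma combN_pos (δ : Fin d) {A : Finset (Fin d → ℕ)} (hne : A.Nonempty)
    (hpos : ∀ a ∈ A, ∀ i, 0 < a i) : ∀ i, 0 < combN δ A i := by
  intro i
  obtain ⟨a0, ha0⟩ := hne
  by_cases hi : i = δ
  · subst hi
    simp only [combN, if_pos rfl]
    exact Nat.pos_of_dvd_of_pos (Finset.gcd_dvd ha0) (hpos a0 ha0 i)
  · simp only [combN, if_neg hi]
    apply Nat.pos_of_ne_zero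
    intro h0
    rw [Finset.lcm_eq_zero_iff] at h0
    obtain ⟨a, ha, h⟩ := h0
    exact (hpos a (Finset.mem_coe.mp ha) i).ne' h

lemma chain {t : Fin d → ℕ} (ht : ∀ i, 0 < t i) (P : Set (Fin d → ℕ)) :
    ∀ (l : List (Fin d)) (S : Set (Fin d → ℕ)) (Q : Finset (Fin d → ℕ)),
      ↑Q ⊆ S → Q.Nonempty → (∀ b ∈ Q, ∀ i, 0 < b i) →
      (∀ b ∈ Q, ∀ w, brickInd b w ∈ sp P) → Oracle t Q →
      ∃ Q' : Finset (Fin d → ℕ),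
        ↑Q' ⊆ l.foldl (fun S δ => ExtN δ S) S ∧ Q'.Nonempty ∧
        (∀ b ∈ Q', ∀ i, 0 < b i) ∧ (∀ b ∈ Q', ∀ w, brickInd b w ∈ sp P) ∧
        (∀ b ∈ Q', ∀ i ∈ l, b i ∣ t i) ∧
        (∀ i, (∀ b ∈ Q, b i ∣ t i) → ∀ b ∈ Q', b i ∣ t i) := by
  intro l
  induction l with
  | nil =>
      intro S Q h1 h2 h3 h4 _
      exact ⟨Q, h1, h2, h3, h4, by simp, fun i h b hb => h b hb⟩
  | cons δ l ih =>
      intro S Q hQS hQne hQpos hQsp hQO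
      obtain ⟨Q1, hne1, hO1, hrep1, hdel1⟩ := oracle_step ht δ hQne hQpos hQO
      have hpos1 : ∀ b ∈ Q1, ∀ i, 0 < b i := by
        intro b hb
        obtain ⟨A, hAne, hAQ, rfl⟩ := hrep1 b hb
        exact combN_pos δ hAne (fun a ha i => hQpos a (hAQ ha) i)
      have hsp1 : ∀ b ∈ Q1, ∀ w, brickInd b w ∈ sp P := by
        intro b hb
        obtain ⟨A, hAne, hAQ, rfl⟩ := hrep1 b hb
        exact sp_comb δ A (fun a ha => hQsp a (hAQ ha))
      have hsub1 : ↑Q1 ⊆ ExtN δ S := by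
        intro s hs
        obtain ⟨A, hAne, hAQ, rfl⟩ := hrep1 s (Finset.mem_coe.mp hs)
        exact ⟨A, hAne, fun a ha => hQS (Finset.mem_coe.mpr (hAQ (Finset.mem_coe.mp ha))), rfl⟩
      have hpres : ∀ i, (∀ b ∈ Q, b i ∣ t i) → ∀ s ∈ Q1, s i ∣ t i := by
        intro i hQi s hs
        by_cases hiδ : i = δ
        · subst hiδ
          exact hdel1 s hs
        · obtain ⟨A, hAne, hAQ, rfl⟩ := hrep1 s hs
          have hlc : combN δ A i = A.lcm (fun b => b i) := by simp [combN, hiδ]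
          rw [hlc]
          exact Finset.lcm_dvd (fun a ha => hQi a (hAQ ha))
      obtain ⟨Q2, g1, g2, g3, g4, g5, g6⟩ := ih (ExtN δ S) Q1 hsub1 hne1 hpos1 hsp1 hO1
      refine ⟨Q2, g1, g2, g3, g4, ?_, ?_⟩
      · intro b hb i hi
        rcases List.mem_cons.mp hi with hiδ | hi'
        · subst hiδ
          exact g6 i hdel1 b hb
        · exact g5 b hb i hi'
      · intro i hQi b hb
        exact g6 i (hpres i hQi) b hb

lemma mset_sub (P : Finset (Fin d → ℕ)) (hne : P.Nonempty)
    (hpos : ∀ b ∈ P, ∀ i, 0 < b i) :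
    MSet (↑P : Set (Fin d → ℕ)) ⊆ ExtAllN (↑P : Set (Fin d → ℕ)) := by
  rintro t ⟨⟨htpos, htil⟩, hmin⟩
  have hO : Oracle t P := oracle_base htpos htil
  obtain ⟨Q', hsub, hne', hpos', hsp', hdvd, -⟩ :=
    chain htpos (↑P : Set (Fin d → ℕ)) (List.finRange d) (↑P) P
      (fun x hx => hx) hne hpos (fun b hb w => mem_sp_of (Finset.mem_coe.mpr hb) w) hO
  obtain ⟨s, hs⟩ := hne'
  have hst : BrickLE s t := fun i => hdvd s hs i (List.mem_finRange i)
  have hTs : Tilable (↑P : Set (Fin d → ℕ)) s := tilable_of_sp (hsp' s hs (fun _ => 0))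
  have hseq : s = t := hmin s ⟨hpos' s hs, hTs⟩ hst
  have hmem : s ∈ ExtAllN (↑P : Set (Fin d → ℕ)) := hsub (Finset.mem_coe.mpr hs)
  rwa [hseq] at hmem

/-! ### Counting -/

lemma extN_bound (δ : Fin d) (S : Set (Fin d → ℕ)) (hS : S.Finite) :
    (ExtN δ S).Finite ∧ (ExtN δ S).ncard ≤ 2 ^ S.ncard := by
  classical
  have hsub : ExtN δ S ⊆ (combN δ) '' ↑(hS.toFinset.powerset) := by
    rintro s ⟨A, hAne, hAS, rfl⟩
    refine ⟨A, ?_, rfl⟩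
    rw [Finset.mem_coe, Finset.mem_powerset]
    intro a ha
    exact hS.mem_toFinset.mpr (hAS (Finset.mem_coe.mpr ha))
  have hfin : ((combN δ) '' ↑(hS.toFinset.powerset)).Finite :=
    (hS.toFinset.powerset).finite_toSet.image _
  refine ⟨hfin.subset hsub, ?_⟩
  calc (ExtN δ S).ncard ≤ ((combN δ) '' ↑(hS.toFinset.powerset)).ncard :=
        Set.ncard_le_ncard hsub hfin
    _ ≤ (↑(hS.toFinset.powerset) : Set (Finset (Fin d → ℕ))).ncard :=
        Set.ncard_image_le (Finset.finite_toSet _)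
    _ = hS.toFinset.powerset.card := Set.ncard_coe_finset _
    _ = 2 ^ hS.toFinset.card := Finset.card_powerset _
    _ = 2 ^ S.ncard := by rw [← Set.ncard_coe_finset hS.toFinset, hS.coe_toFinset]

lemma tower_shift : ∀ (k m : ℕ), tower k (2 ^ m) = tower (k + 1) m := by
  intro k
  induction k with
  | zero => intro m; simp [tower]
  | succ k ih => intro m; simp only [tower, ih]

lemma fold_bound : ∀ (l : List (Fin d)) (S : Set (Fin d → ℕ)) (m : ℕ),
    S.Finite → S.ncard ≤ m →
    (l.foldl (fun S δ => ExtN δ S) S).Finite ∧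
      (l.foldl (fun S δ => ExtN δ S) S).ncard ≤ tower l.length m := by
  intro l
  induction l with
  | nil => intro S m h1 h2; exact ⟨h1, h2⟩
  | cons δ l ih =>
      intro S m h1 h2
      obtain ⟨hf, hc⟩ := extN_bound δ S h1
      have hc2 : (ExtN δ S).ncard ≤ 2 ^ m :=
        le_trans hc (Nat.pow_le_pow_right (by norm_num) h2)
      obtain ⟨g1, g2⟩ := ih (ExtN δ S) (2 ^ m) hf hc2
      refine ⟨g1, ?_⟩
      calc (l.foldl (fun S δ => ExtN δ S) (ExtN δ S)).ncard
          ≤ tower l.length (2 ^ m) := g2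
        _ = tower (l.length + 1) m := tower_shift l.length m
        _ = tower (δ :: l).length m := by simp

end Statement13Aux
/-- Tower bound on rank: for every `d ≥ 1` and every nonempty finite set
`P` of `d`-dimensional bricks with `card P = r`, `rank(P) ≤ T(d,r)`. -/
theorem statement13 {d : ℕ} (hd : 1 ≤ d) (P : Finset (Fin d → ℕ))
    (hne : P.Nonempty) (r : ℕ) (hcard : P.card = r)
    (hpos : ∀ b ∈ P, ∀ i, 0 < b i) :
    brickRank (↑P : Set (Fin d → ℕ)) ≤ tower d r := by
  classical
  have hsub := Statement13Aux.mset_sub P hne hpos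
  have hfold := Statement13Aux.fold_bound (List.finRange d) (↑P : Set (Fin d → ℕ)) r
    P.finite_toSet (by rw [Set.ncard_coe_finset, hcard])
  have hE : ExtAllN (↑P : Set (Fin d → ℕ))
      = (List.finRange d).foldl (fun S δ => ExtN δ S) (↑P : Set (Fin d → ℕ)) := rfl
  calc brickRank (↑P : Set (Fin d → ℕ)) = (MSet (↑P : Set (Fin d → ℕ))).ncard := rfl
    _ ≤ (ExtAllN (↑P : Set (Fin d → ℕ))).ncard :=
        Set.ncard_le_ncard hsub (by rw [hE]; exact hfold.1)
    _ ≤ tower (List.finRange d).length r := by rw [hE]; exact hfold.2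
    _ = tower d r := by rw [List.length_finRange]
end
end

section
/- (Improved rank bound.) For every d ≥ 1 and every nonempty finite set P of d-dimensional bricks with card P = r, rank(P) ≤ d^(d^r). -/
open scoped Classical

noncomputable section

-- helpers
def ind1 (u : ℕ) (v s : ℝ) : ℤ := if v ≤ s ∧ s < v + u then 1 else 0

lemma brickInd_eq_prod {d : ℕ} (b : Fin d → ℕ) (w y : Fin d → ℝ) :
    brickInd b w y = ∏ i, ind1 (b i) (w i) (y i) := by
  unfold brickInd ind1
  by_cases h : ∀ i, w i ≤ y i ∧ y i < w i + (b i : ℝ)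
  · rw [if_pos h, Finset.prod_eq_one]
    intro i _; rw [if_pos (h i)]
  · rw [if_neg h, eq_comm]
    rw [not_forall] at h
    obtain ⟨i, hi⟩ := h
    exact Finset.prod_eq_zero (Finset.mem_univ i) (if_neg hi)

lemma brickInd_shift {d : ℕ} (b : Fin d → ℕ) (v y u : Fin d → ℝ) :
    brickInd b (fun i => v i + u i) y = brickInd b v (fun i => y i - u i) := by
  unfold brickInd
  apply if_congr _ rfl rfl
  apply forall_congr'
  intro i
  dsimp only
  constructor <;> rintro ⟨h1, h2⟩ <;> constructor <;> linarith

lemma brickInd_eq_sub {d : ℕ} (b : Fin d → ℕ) (u y : Fin d → ℝ) :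
    brickInd b u y = brickInd b (fun _ => 0) (fun i => y i - u i) := by
  have h := brickInd_shift b (fun _ => 0) y u
  simp only [zero_add] at h
  rw [← h]

/-- Composition lemma -/
lemma tilable_of_combo {d : ℕ} (P : Set (Fin d → ℕ)) (t : Fin d → ℕ)
    {ι : Type} [Fintype ι] (p : ι → (Fin d → ℕ)) (w : ι → (Fin d → ℝ)) (γ : ι → ℤ)
    (hp : ∀ j, Tilable P (p j))
    (hid : ∀ y, brickInd t (fun _ => 0) y = ∑ j, γ j * brickInd (p j) (w j) y) :
    Tilable P t := by
  choose m q v c hq hins using hp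
  let e := (Fintype.equivFin (Σ j : ι, Fin (m j))).symm
  refine ⟨Fintype.card (Σ j : ι, Fin (m j)),
    fun a => q (e a).1 (e a).2,
    fun a => fun i => v (e a).1 (e a).2 i + w (e a).1 i,
    fun a => γ (e a).1 * c (e a).1 (e a).2,
    fun a => hq _ _, ?_⟩
  intro y
  refine (hid y).trans ?_
  have main : ∑ j : ι, γ j * brickInd (p j) (w j) y
      = ∑ s : Σ j : ι, Fin (m j),
          (γ s.1 * c s.1 s.2) * brickInd (q s.1 s.2) (fun i => v s.1 s.2 i + w s.1 i) y := by
    rw [← Finset.univ_sigma_univ, Finset.sum_sigma]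
    apply Finset.sum_congr rfl
    intro j _
    have hj := hins j (fun i => y i - w j i)
    rw [brickInd_eq_sub (p j) (w j) y, hj, Finset.mul_sum]
    apply Finset.sum_congr rfl
    intro k _
    rw [brickInd_shift]
    ring
  rw [main]
  exact (Equiv.sum_comp e _).symm

-- 1-d stacking identity
lemma ind1_stack (b k : ℕ) (s : ℝ) :
    ind1 (k * b) 0 s = ∑ j : Fin k, ind1 b ((j : ℝ) * b) s := by
  induction k with
  | zero =>
    simp only [Finset.univ_eq_empty, Finset.sum_empty, ind1, Nat.zero_mul]
    rw [if_neg]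
    rintro ⟨h1, h2⟩
    norm_num at h2
    linarith
  | succ k ih =>
    rw [Fin.sum_univ_castSucc]
    simp only [Fin.coe_castSucc, Fin.val_last]
    rw [← ih]
    unfold ind1
    have hb : (0:ℝ) ≤ (b : ℝ) := Nat.cast_nonneg b
    have hkb : (0:ℝ) ≤ (k : ℝ) * b := by positivity
    have hc : (((k+1) * b : ℕ) : ℝ) = (k : ℝ) * b + b := by push_cast; ring
    have hc2 : ((k * b : ℕ) : ℝ) = (k : ℝ) * b := by push_cast; ring
    rw [hc, hc2]
    simp only [zero_add]
    by_cases h0 : 0 ≤ s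
    · by_cases hk : s < (k:ℝ) * b
      · have hkk : s < (k:ℝ) * b + b := by linarith
        rw [if_pos ⟨h0, hkk⟩, if_pos ⟨h0, hk⟩,
          if_neg (by rintro ⟨c1, c2⟩; linarith), add_zero]
      · by_cases hkk : s < (k:ℝ) * b + b
        · rw [if_pos ⟨h0, hkk⟩, if_neg (by rintro ⟨c1, c2⟩; exact hk c2),
            if_pos ⟨le_of_not_gt hk, hkk⟩]
          norm_num
        · rw [if_neg (by rintro ⟨c1, c2⟩; exact hkk c2),
            if_neg (by rintro ⟨c1, c2⟩; exact hk (by linarith)),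
            if_neg (by rintro ⟨c1, c2⟩; exact hkk c2), add_zero]
    · rw [if_neg (by rintro ⟨c1, c2⟩; exact h0 c1), if_neg (by rintro ⟨c1, c2⟩; exact h0 c1),
        if_neg (by rintro ⟨c1, c2⟩; exact h0 (le_trans hkb c1)), add_zero]

lemma brickInd_stack {d : ℕ} (b c : Fin d → ℕ) (hdvd : ∀ i, b i ∣ c i) (y : Fin d → ℝ) :
    brickInd c (fun _ => 0) y
      = ∑ g : (i : Fin d) → Fin (c i / b i), brickInd b (fun i => (g i : ℝ) * b i) y := by
  rw [brickInd_eq_prod]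
  have key : ∀ i : Fin d, ind1 (c i) ((fun (_ : Fin d) => (0:ℝ)) i) (y i)
      = ∑ j : Fin (c i / b i), ind1 (b i) ((j:ℝ) * b i) (y i) := by
    intro i
    have := ind1_stack (b i) (c i / b i) (y i)
    rw [Nat.div_mul_cancel (hdvd i)] at this
    simpa using this
  calc (∏ i, ind1 (c i) ((fun (_ : Fin d) => (0:ℝ)) i) (y i))
      = ∏ i, ∑ j : Fin (c i / b i), ind1 (b i) ((j:ℝ) * b i) (y i) :=
        Finset.prod_congr rfl (fun i _ => key i)
    _ = ∑ g ∈ Fintype.piFinset (fun i => (Finset.univ : Finset (Fin (c i / b i)))),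
          ∏ i, ind1 (b i) ((g i : ℝ) * b i) (y i) := Finset.prod_univ_sum _ _
    _ = ∑ g : (i : Fin d) → Fin (c i / b i), brickInd b (fun i => (g i : ℝ) * b i) y := by
        rw [Fintype.piFinset_univ]
        exact Finset.sum_congr rfl (fun g _ => (brickInd_eq_prod b _ y).symm)

lemma tilable_mono_dvd {d : ℕ} (P : Set (Fin d → ℕ)) (b c : Fin d → ℕ)
    (hdvd : ∀ i, b i ∣ c i) (hb : Tilable P b) : Tilable P c := by
  apply tilable_of_combo P c (ι := (i : Fin d) → Fin (c i / b i)) (fun _ => b)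
    (fun g => fun i => (g i : ℝ) * b i) (fun _ => 1) (fun _ => hb)
  intro y
  rw [brickInd_stack b c hdvd y]
  exact Finset.sum_congr rfl (fun g _ => (one_mul _).symm)

-- splitting along one direction
lemma ind1_add (u v : ℕ) (s : ℝ) :
    ind1 (u + v) 0 s = ind1 u 0 s + ind1 v (u : ℝ) s := by
  unfold ind1
  have hu : (0:ℝ) ≤ (u : ℝ) := Nat.cast_nonneg u
  have hv : (0:ℝ) ≤ (v : ℝ) := Nat.cast_nonneg v
  have hc : ((u + v : ℕ) : ℝ) = (u : ℝ) + v := by push_cast; ring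
  rw [hc]
  simp only [zero_add]
  by_cases h0 : 0 ≤ s
  · by_cases hk : s < (u:ℝ)
    · have hkk : s < (u:ℝ) + v := by linarith
      rw [if_pos ⟨h0, hkk⟩, if_pos ⟨h0, hk⟩,
        if_neg (by rintro ⟨c1, c2⟩; linarith), add_zero]
    · by_cases hkk : s < (u:ℝ) + v
      · rw [if_pos ⟨h0, hkk⟩, if_neg (by rintro ⟨c1, c2⟩; exact hk c2),
          if_pos ⟨le_of_not_gt hk, hkk⟩]
        norm_num
      · rw [if_neg (by rintro ⟨c1, c2⟩; exact hkk c2),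
          if_neg (by rintro ⟨c1, c2⟩; exact hk (by linarith)),
          if_neg (by rintro ⟨c1, c2⟩; exact hkk c2), add_zero]
  · rw [if_neg (by rintro ⟨c1, c2⟩; exact h0 c1), if_neg (by rintro ⟨c1, c2⟩; exact h0 c1),
      if_neg (by rintro ⟨c1, c2⟩; exact h0 (le_trans hu c1)), add_zero]

lemma brickInd_split {d : ℕ} (δ : Fin d) (u v : ℕ) (L : Fin d → ℕ) (y : Fin d → ℝ) :
    brickInd (Function.update L δ (u + v)) (fun _ => 0) y
      = brickInd (Function.update L δ u) (fun _ => 0) y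
        + brickInd (Function.update L δ v) (fun i => if i = δ then (u:ℝ) else 0) y := by
  rw [brickInd_eq_prod, brickInd_eq_prod, brickInd_eq_prod]
  rw [← Finset.mul_prod_erase Finset.univ _ (Finset.mem_univ δ),
      ← Finset.mul_prod_erase Finset.univ _ (Finset.mem_univ δ),
      ← Finset.mul_prod_erase Finset.univ _ (Finset.mem_univ δ)]
  have e1 : ∀ i ∈ Finset.univ.erase δ,
      ind1 (Function.update L δ u i) ((fun (_ : Fin d) => (0:ℝ)) i) (y i)
        = ind1 (Function.update L δ (u + v) i) ((fun (_ : Fin d) => (0:ℝ)) i) (y i) := by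
    intro i hi
    rw [Function.update_of_ne (Finset.mem_erase.1 hi).1, Function.update_of_ne (Finset.mem_erase.1 hi).1]
  have e2 : ∀ i ∈ Finset.univ.erase δ,
      ind1 (Function.update L δ v i) (if i = δ then (u:ℝ) else 0) (y i)
        = ind1 (Function.update L δ (u + v) i) ((fun (_ : Fin d) => (0:ℝ)) i) (y i) := by
    intro i hi
    rw [Function.update_of_ne (Finset.mem_erase.1 hi).1, Function.update_of_ne (Finset.mem_erase.1 hi).1,
      if_neg (Finset.mem_erase.1 hi).1]
  rw [Finset.prod_congr rfl e1, Finset.prod_congr rfl e2]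
  rw [Function.update_self, Function.update_self, Function.update_self, if_pos rfl]
  have := ind1_add u v (y δ)
  rw [this]
  ring

lemma tilable_update_add {d : ℕ} (P : Set (Fin d → ℕ)) (δ : Fin d) (L : Fin d → ℕ) (u v : ℕ)
    (hu : Tilable P (Function.update L δ u)) (hv : Tilable P (Function.update L δ v)) :
    Tilable P (Function.update L δ (u + v)) := by
  apply tilable_of_combo P _ (ι := Bool)
    (fun b => if b then Function.update L δ u else Function.update L δ v)
    (fun b => if b then (fun _ => 0) else (fun i => if i = δ then (u:ℝ) else 0))
    (fun _ => 1) (fun b => by cases b <;> simpa)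
  intro y
  rw [brickInd_split δ u v L y, Fintype.sum_bool]
  simp

lemma tilable_update_sub {d : ℕ} (P : Set (Fin d → ℕ)) (δ : Fin d) (L : Fin d → ℕ) (u v : ℕ)
    (hvu : v ≤ u)
    (hu : Tilable P (Function.update L δ u)) (hv : Tilable P (Function.update L δ v)) :
    Tilable P (Function.update L δ (u - v)) := by
  apply tilable_of_combo P _ (ι := Bool)
    (fun b => if b then Function.update L δ u else Function.update L δ v)
    (fun b => if b then (fun _ => 0) else (fun i => if i = δ then ((u - v : ℕ) : ℝ) else 0))
    (fun b => if b then 1 else -1) (fun b => by cases b <;> simpa)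
  intro y
  have := brickInd_split δ (u - v) v L y
  rw [Nat.sub_add_cancel hvu] at this
  rw [Fintype.sum_bool]
  simp only [Bool.false_eq_true, if_true, if_false, one_mul, neg_one_mul, reduceIte]
  linarith [this]

lemma tilable_update_gcd {d : ℕ} (P : Set (Fin d → ℕ)) (δ : Fin d) (L : Fin d → ℕ) :
    ∀ N a b : ℕ, a + b ≤ N → 0 < a → 0 < b →
      Tilable P (Function.update L δ a) → Tilable P (Function.update L δ b) →
      Tilable P (Function.update L δ (Nat.gcd a b)) := by
  intro N
  induction N with
  | zero => intro a b h ha hb _ _; omega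
  | succ N ih =>
    intro a b hab ha hb Ta Tb
    rcases lt_trichotomy a b with h | h | h
    · rw [← Nat.gcd_sub_self_right (le_of_lt h)]
      exact ih a (b - a) (by omega) ha (by omega) Ta (tilable_update_sub P δ L b a (le_of_lt h) Tb Ta)
    · rw [h, Nat.gcd_self]
      exact Tb
    · rw [Nat.gcd_comm, ← Nat.gcd_sub_self_right (le_of_lt h)]
      exact ih b (a - b) (by omega) hb (by omega) Tb (tilable_update_sub P δ L a b (le_of_lt h) Ta Tb)

lemma combN_pos {d : ℕ} (δ : Fin d) (A : Finset (Fin d → ℕ)) (hA : A.Nonempty)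
    (hpos : ∀ a ∈ A, ∀ i, 0 < a i) : ∀ i, 0 < combN δ A i := by
  intro i
  unfold combN
  split_ifs
  · obtain ⟨a, ha⟩ := hA
    rcases Nat.eq_zero_or_pos (A.gcd fun b => b δ) with h | h
    · rw [Finset.gcd_eq_zero_iff] at h
      exact absurd (h a ha) (hpos a ha δ).ne'
    · exact h
  · rcases Nat.eq_zero_or_pos (A.lcm fun b => b i) with h | h
    · rw [Finset.lcm_eq_zero_iff] at h
      obtain ⟨a, ha, h0⟩ := h
      exact ((hpos a ha i).ne' h0).elim
    · exact h

lemma tilable_combN {d : ℕ} (P : Set (Fin d → ℕ)) (δ : Fin d) (A : Finset (Fin d → ℕ))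
    (hA : A.Nonempty) (hpos : ∀ a ∈ A, ∀ i, 0 < a i) (ht : ∀ a ∈ A, Tilable P a) :
    Tilable P (combN δ A) := by
  set L : Fin d → ℕ := fun j => A.lcm (fun b => b j) with hL
  have hTa : ∀ a ∈ A, Tilable P (Function.update L δ (a δ)) := by
    intro a ha
    apply tilable_mono_dvd P a _ _ (ht a ha)
    intro i
    rw [Function.update_apply]
    split_ifs with h
    · subst h; exact dvd_rfl
    · exact Finset.dvd_lcm ha
  have key : ∀ B : Finset (Fin d → ℕ), B.Nonempty → B ⊆ A →
      Tilable P (Function.update L δ (B.gcd (fun b => b δ))) ∧ 0 < B.gcd (fun b => b δ) := by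
    intro B
    induction B using Finset.induction_on with
    | empty => intro h; exact absurd rfl h.ne_empty
    | @insert a B haB ih =>
      intro _ hsub
      have haA : a ∈ A := hsub (Finset.mem_insert_self a B)
      have hgi : (insert a B).gcd (fun b => b δ) = Nat.gcd (a δ) (B.gcd (fun b => b δ)) :=
        Finset.gcd_insert
      rw [hgi]
      rcases Finset.eq_empty_or_nonempty B with hB | hB
      · subst hB
        simp only [Finset.gcd_empty, Nat.gcd_zero_right]
        exact ⟨hTa a haA, hpos a haA δ⟩
      · obtain ⟨ihT, ihpos⟩ := ih hB (fun x hx => hsub (Finset.mem_insert_of_mem hx))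
        constructor
        · exact tilable_update_gcd P δ L (a δ + B.gcd (fun b => b δ)) (a δ) _ le_rfl
            (hpos a haA δ) ihpos (hTa a haA) ihT
        · exact Nat.gcd_pos_of_pos_left _ (hpos a haA δ)
  have hcomb : combN δ A = Function.update L δ (A.gcd (fun b => b δ)) := by
    funext j
    unfold combN
    rw [Function.update_apply]
  rw [hcomb]
  exact (key A hA (Finset.Subset.refl A)).1

-- stage machinery
def extF {d : ℕ} (δ : Fin d) (Z : Finset (Fin d → ℕ)) : Finset (Fin d → ℕ) :=
  (Z.powerset.filter (fun A => A.Nonempty)).image (combN δ)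

lemma mem_extF {d : ℕ} {δ : Fin d} {Z : Finset (Fin d → ℕ)} {c : Fin d → ℕ} :
    c ∈ extF δ Z ↔ ∃ A : Finset (Fin d → ℕ), A ⊆ Z ∧ A.Nonempty ∧ c = combN δ A := by
  unfold extF
  simp only [Finset.mem_image, Finset.mem_filter, Finset.mem_powerset]
  constructor
  · rintro ⟨A, ⟨h1, h2⟩, h3⟩; exact ⟨A, h1, h2, h3.symm⟩
  · rintro ⟨A, h1, h2, h3⟩; exact ⟨A, ⟨h1, h2⟩, h3.symm⟩

lemma combN_singleton {d : ℕ} (δ : Fin d) (b : Fin d → ℕ) : combN δ ({b} : Finset (Fin d → ℕ)) = b := by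
  funext j
  unfold combN
  rw [Finset.gcd_singleton, Finset.lcm_singleton]
  split_ifs with h
  · rw [h]; simp
  · simp

lemma subset_extF {d : ℕ} (δ : Fin d) (Z : Finset (Fin d → ℕ)) : Z ⊆ extF δ Z := by
  intro b hb
  rw [mem_extF]
  exact ⟨{b}, Finset.singleton_subset_iff.2 hb, Finset.singleton_nonempty b, (combN_singleton δ b).symm⟩

lemma extF_mono {d : ℕ} (δ : Fin d) {Z Z' : Finset (Fin d → ℕ)} (h : Z' ⊆ Z) :
    extF δ Z' ⊆ extF δ Z := by
  intro c hc
  rw [mem_extF] at hc ⊢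
  obtain ⟨A, h1, h2, h3⟩ := hc
  exact ⟨A, h1.trans h, h2, h3⟩

def stageK {d : ℕ} (Z : Finset (Fin d → ℕ)) : ℕ → Finset (Fin d → ℕ)
  | 0 => Z
  | k+1 => if h : k < d then extF ⟨k, h⟩ (stageK Z k) else stageK Z k

lemma stageK_subset {d : ℕ} (Z : Finset (Fin d → ℕ)) (k : ℕ) : stageK Z k ⊆ stageK Z (k+1) := by
  show stageK Z k ⊆ if h : k < d then extF ⟨k, h⟩ (stageK Z k) else stageK Z k
  split_ifs with h
  · exact subset_extF _ _
  · exact Finset.Subset.refl _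

lemma stageK_subset_of_le {d : ℕ} (Z : Finset (Fin d → ℕ)) {k l : ℕ} (h : k ≤ l) :
    stageK Z k ⊆ stageK Z l := by
  induction l with
  | zero => rw [Nat.le_zero.1 h]
  | succ l ih =>
    rcases Nat.lt_or_ge k (l+1) with h' | h'
    · exact (ih (by omega)).trans (stageK_subset Z l)
    · have : k = l + 1 := by omega
      rw [this]

lemma stageK_mono {d : ℕ} {Z Z' : Finset (Fin d → ℕ)} (h : Z' ⊆ Z) (k : ℕ) :
    stageK Z' k ⊆ stageK Z k := by
  induction k with
  | zero => exact h
  | succ k ih =>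
    show stageK Z' (k+1) ⊆ stageK Z (k+1)
    unfold stageK
    split_ifs with hk
    · exact extF_mono _ ih
    · exact ih

lemma stageK_good {d : ℕ} (P : Set (Fin d → ℕ)) (Z : Finset (Fin d → ℕ))
    (hZ : ∀ b ∈ Z, (∀ i, 0 < b i) ∧ Tilable P b) (k : ℕ) :
    ∀ c ∈ stageK Z k, (∀ i, 0 < c i) ∧ Tilable P c := by
  induction k with
  | zero => exact hZ
  | succ k ih =>
    intro c hc
    unfold stageK at hc
    split_ifs at hc with hk
    · rw [mem_extF] at hc
      obtain ⟨A, h1, h2, h3⟩ := hc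
      subst h3
      have hpos : ∀ a ∈ A, ∀ i, 0 < a i := fun a ha => (ih a (h1 ha)).1
      exact ⟨combN_pos _ A h2 hpos, tilable_combN P _ A h2 hpos (fun a ha => (ih a (h1 ha)).2)⟩
    · exact ih c hc

lemma tilable_mem {d : ℕ} {P : Set (Fin d → ℕ)} {b : Fin d → ℕ} (hb : b ∈ P) : Tilable P b := by
  refine ⟨1, fun _ => b, fun _ => fun _ => 0, fun _ => 1, fun _ => hb, fun y => ?_⟩
  rw [Fin.sum_univ_one, one_mul]

lemma combN_apply_self {d : ℕ} (δ : Fin d) (A : Finset (Fin d → ℕ)) :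
    combN δ A δ = A.gcd (fun b => b δ) := if_pos rfl

lemma combN_apply_ne {d : ℕ} {δ i : Fin d} (A : Finset (Fin d → ℕ)) (h : i ≠ δ) :
    combN δ A i = A.lcm (fun b => b i) := if_neg h

lemma pp_dvd_lcm2 {p a m n : ℕ} (hp : p.Prime) (hm : m ≠ 0) (hn : n ≠ 0) :
    p^a ∣ Nat.lcm m n ↔ p^a ∣ m ∨ p^a ∣ n := by
  have hl : Nat.lcm m n ≠ 0 := Nat.lcm_ne_zero hm hn
  rw [hp.pow_dvd_iff_le_factorization hl, hp.pow_dvd_iff_le_factorization hm,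
    hp.pow_dvd_iff_le_factorization hn, Nat.factorization_lcm hm hn]
  simp [Finsupp.sup_apply, le_max_iff]

lemma pp_dvd_finset_lcm {d : ℕ} {p a : ℕ} (hp : p.Prime) (ha : 1 ≤ a)
    (A : Finset (Fin d → ℕ)) (f : (Fin d → ℕ) → ℕ) (hf : ∀ b ∈ A, f b ≠ 0) :
    p^a ∣ A.lcm f ↔ ∃ b ∈ A, p^a ∣ f b := by
  induction A using Finset.induction_on with
  | empty =>
    simp only [Finset.lcm_empty, Nat.dvd_one, Finset.notMem_empty, false_and, exists_false,
      iff_false]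
    intro h
    have h2 : 1 < p ^ a := Nat.one_lt_pow (by omega) hp.one_lt
    omega
  | @insert x B hxB ih =>
    have hlcm : (insert x B).lcm f = Nat.lcm (f x) (B.lcm f) := Finset.lcm_insert
    have hBne : B.lcm f ≠ 0 := by
      intro h0
      rw [Finset.lcm_eq_zero_iff] at h0
      obtain ⟨b, hb, hb0⟩ := h0
      exact hf b (Finset.mem_insert_of_mem hb) hb0
    rw [hlcm, pp_dvd_lcm2 hp (hf x (Finset.mem_insert_self x B)) hBne,
      ih (fun b hb => hf b (Finset.mem_insert_of_mem hb))]
    constructor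
    · rintro (h | ⟨b, hb, h⟩)
      · exact ⟨x, Finset.mem_insert_self x B, h⟩
      · exact ⟨b, Finset.mem_insert_of_mem hb, h⟩
    · rintro ⟨b, hb, h⟩
      rcases Finset.mem_insert.1 hb with rfl | hb'
      · exact Or.inl h
      · exact Or.inr ⟨b, hb', h⟩

lemma exists_pp_not_dvd {g m : ℕ} (hm : 0 < m) (h : ¬ g ∣ m) :
    ∃ p a : ℕ, p.Prime ∧ 1 ≤ a ∧ p^a ∣ g ∧ ¬ p^a ∣ m := by
  rw [Nat.dvd_iff_prime_pow_dvd_dvd] at h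
  push_neg at h
  obtain ⟨p, a, hp, hpg, hpm⟩ := h
  have hp' : p.Prime := hp
  refine ⟨p, a, hp', ?_, hpg, hpm⟩
  rcases Nat.eq_zero_or_pos a with rfl | ha
  · exact absurd (one_dvd m) (by simpa using hpm)
  · exact ha

lemma stageK_pos {d : ℕ} {Z : Finset (Fin d → ℕ)} (hZ : ∀ b ∈ Z, ∀ i, 0 < b i) (k : ℕ) :
    ∀ c ∈ stageK Z k, ∀ i, 0 < c i := by
  have := stageK_good (Set.univ : Set (Fin d → ℕ)) Z
    (fun b hb => ⟨hZ b hb, tilable_mem (Set.mem_univ b)⟩) k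
  exact fun c hc => (this c hc).1

lemma stageK_pp_not_dvd {d : ℕ} {p a : ℕ} (hp : p.Prime) (ha : 1 ≤ a) {j : Fin d}
    {Z : Finset (Fin d → ℕ)} (hZpos : ∀ b ∈ Z, ∀ i, 0 < b i)
    (hZ : ∀ b ∈ Z, ¬ p^a ∣ b j) :
    ∀ k : ℕ, k ≤ j.val → ∀ c ∈ stageK Z k, ¬ p^a ∣ c j := by
  intro k
  induction k with
  | zero => exact fun _ => hZ
  | succ k ih =>
    intro hk c hc
    unfold stageK at hc
    split_ifs at hc with hkd
    · rw [mem_extF] at hc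
      obtain ⟨A, h1, h2, h3⟩ := hc
      subst h3
      have hne : j ≠ (⟨k, hkd⟩ : Fin d) := by
        intro hcon
        have : j.val = k := by rw [hcon]
        omega
      rw [combN_apply_ne A hne]
      rw [pp_dvd_finset_lcm hp ha A _ (fun b hb => (stageK_pos hZpos k b (h1 hb) j).ne')]
      rintro ⟨b, hb, hdvd⟩
      exact ih (by omega) b (h1 hb) hdvd
    · exact ih (by omega) c hc

lemma stageK_restrict {d : ℕ} {q : ℕ} {j : Fin d} (Z : Finset (Fin d → ℕ)) :
    ∀ k : ℕ, k ≤ j.val → ∀ c ∈ stageK Z k, ¬ q ∣ c j →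
      c ∈ stageK (Z.filter (fun b => ¬ q ∣ b j)) k := by
  intro k
  induction k with
  | zero => exact fun _ c hc hq => Finset.mem_filter.2 ⟨hc, hq⟩
  | succ k ih =>
    intro hk c hc hq
    unfold stageK at hc ⊢
    split_ifs at hc ⊢ with hkd
    · rw [mem_extF] at hc ⊢
      obtain ⟨A, h1, h2, h3⟩ := hc
      have hne : j ≠ (⟨k, hkd⟩ : Fin d) := by
        intro hcon
        have : j.val = k := by rw [hcon]
        omega
      refine ⟨A, ?_, h2, h3⟩
      intro x hx
      have hxj : ¬ q ∣ x j := by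
        intro hdvd
        apply hq
        subst h3
        rw [combN_apply_ne A hne]
        exact hdvd.trans (Finset.dvd_lcm hx)
      exact ih (by omega) x (h1 hx) hxj
    · exact ih (by omega) c hc hq

lemma lemmaN {d : ℕ} (t : Fin d → ℕ) (ht : ∀ i, 0 < t i) :
    ∀ j : ℕ, j ≤ d → ∀ Z : Finset (Fin d → ℕ), (∀ b ∈ Z, ∀ i, 0 < b i) →
      (∀ c ∈ stageK Z j, ∃ i : Fin d, i.val < j ∧ ¬ c i ∣ t i) →
      ∃ n : Fin d → ℕ, (∀ i : Fin d, i.val < j → ¬ n i ∣ t i) ∧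
        (∀ c ∈ stageK Z j, ∃ i : Fin d, i.val < j ∧ n i ∣ c i) := by
  intro j
  induction j with
  | zero =>
    intro _ Z _ hfail
    refine ⟨fun _ => 0, fun i hi => absurd hi (by omega), fun c hc => ?_⟩
    obtain ⟨i, hi, _⟩ := hfail c hc
    exact absurd hi (by omega)
  | succ j ih =>
    intro hjd Z hZpos hfail
    have hjd' : j < d := hjd
    obtain ⟨δ, hδval⟩ : ∃ δ : Fin d, δ.val = j := ⟨⟨j, hjd'⟩, rfl⟩
    have hδeq : (⟨j, hjd'⟩ : Fin d) = δ := Fin.ext (by rw [hδval])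
    have hstep : stageK Z (j+1) = extF δ (stageK Z j) := by
      show (if h : j < d then extF ⟨j, h⟩ (stageK Z j) else stageK Z j) = _
      rw [dif_pos hjd', hδeq]
    have hgcd : ¬ (((stageK Z j).filter (fun c => ∀ i : Fin d, i.val < j → c i ∣ t i)).gcd (fun c => c δ)) ∣ t δ := by
      intro hdvd
      rcases Finset.eq_empty_or_nonempty ((stageK Z j).filter (fun c => ∀ i : Fin d, i.val < j → c i ∣ t i)) with hWe | hWne
      · rw [hWe, Finset.gcd_empty] at hdvd
        exact absurd (Nat.eq_zero_of_zero_dvd hdvd) (ht δ).ne'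
      · have hmem : combN δ ((stageK Z j).filter (fun c => ∀ i : Fin d, i.val < j → c i ∣ t i)) ∈ stageK Z (j+1) := by
          rw [hstep, mem_extF]
          exact ⟨((stageK Z j).filter (fun c => ∀ i : Fin d, i.val < j → c i ∣ t i)), Finset.filter_subset _ _, hWne, rfl⟩
        obtain ⟨i, hij, hnd⟩ := hfail _ hmem
        apply hnd
        by_cases hiδ : i = δ
        · subst hiδ
          rw [combN_apply_self]
          exact hdvd
        · have hij' : i.val < j := by
            have hne2 : i.val ≠ j := by
              intro hcon
              apply hiδ
              apply Fin.ext
              rw [hcon, hδval]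
            exact Nat.lt_of_le_of_ne (Nat.lt_succ_iff.mp hij) hne2
          rw [combN_apply_ne ((stageK Z j).filter (fun c => ∀ i : Fin d, i.val < j → c i ∣ t i)) hiδ]
          apply Finset.lcm_dvd
          intro c hc
          exact (Finset.mem_filter.1 hc).2 i hij'
    obtain ⟨p, a, hp, ha, hpg, hpm⟩ := exists_pp_not_dvd (ht δ) hgcd
    have hZ'pos : ∀ b ∈ (Z.filter (fun b => ¬ p^a ∣ b δ)), ∀ i, 0 < b i := fun b hb => hZpos b (Finset.filter_subset _ _ hb)
    have hZ'nd : ∀ b ∈ (Z.filter (fun b => ¬ p^a ∣ b δ)), ¬ p^a ∣ b δ := fun b hb => (Finset.mem_filter.1 hb).2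
    have hfail' : ∀ c ∈ stageK (Z.filter (fun b => ¬ p^a ∣ b δ)) j, ∃ i : Fin d, i.val < j ∧ ¬ c i ∣ t i := by
      intro c hc
      by_contra hno
      push_neg at hno
      have hcZ : c ∈ stageK Z j := stageK_mono (Finset.filter_subset _ _) j hc
      have hcW : c ∈ ((stageK Z j).filter (fun c => ∀ i : Fin d, i.val < j → c i ∣ t i)) := Finset.mem_filter.2 ⟨hcZ, hno⟩
      have h1 : p^a ∣ c δ := hpg.trans (Finset.gcd_dvd hcW)
      have h2 : ¬ p^a ∣ c δ :=
        stageK_pp_not_dvd hp ha hZ'pos hZ'nd j (le_of_eq hδval.symm) c hc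
      exact h2 h1
    obtain ⟨n', hn'1, hn'2⟩ := ih (Nat.le_of_succ_le hjd) (Z.filter (fun b => ¬ p^a ∣ b δ)) hZ'pos hfail'
    refine ⟨fun i => if i = δ then p^a else n' i, ?_, ?_⟩
    · intro i hij
      dsimp only
      by_cases hiδ : i = δ
      · subst hiδ
        rw [if_pos rfl]
        exact hpm
      · rw [if_neg hiδ]
        have hne2 : i.val ≠ j := by
          intro hcon
          apply hiδ
          apply Fin.ext
          rw [hcon, hδval]
        exact hn'1 i (Nat.lt_of_le_of_ne (Nat.lt_succ_iff.mp hij) hne2)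
    · intro c hc
      rw [hstep, mem_extF] at hc
      obtain ⟨A, h1, h2, h3⟩ := hc
      by_cases hall : ∀ x ∈ A, p^a ∣ x δ
      · refine ⟨δ, by rw [hδval]; exact Nat.lt_succ_self _, ?_⟩
        dsimp only
        rw [if_pos rfl, h3, combN_apply_self]
        exact Finset.dvd_gcd hall
      · push_neg at hall
        obtain ⟨x, hxA, hxnd⟩ := hall
        have hx' : x ∈ stageK (Z.filter (fun b => ¬ p^a ∣ b δ)) j :=
          stageK_restrict Z j (le_of_eq hδval.symm) x (h1 hxA) hxnd
        obtain ⟨i, hij, hdvd⟩ := hn'2 x hx'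
        have hiδ : i ≠ δ := by
          intro hcon
          rw [hcon, hδval] at hij
          exact absurd hij (lt_irrefl j)
        refine ⟨i, Nat.lt_succ_of_lt hij, ?_⟩
        dsimp only
        rw [if_neg hiδ, h3, combN_apply_ne A hiδ]
        exact hdvd.trans (Finset.dvd_lcm hxA)

lemma main_comb {d : ℕ} (P : Finset (Fin d → ℕ)) (hPne : P.Nonempty)
    (hpos : ∀ b ∈ P, ∀ i, 0 < b i)
    (t : Fin d → ℕ) (ht : ∀ i, 0 < t i)
    (hstar : ∀ n : Fin d → ℕ, (∀ b ∈ P, ∃ i, n i ∣ b i) → ∃ i, n i ∣ t i) :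
    ∃ c ∈ stageK P d, ∀ i, c i ∣ t i := by
  have key : ∀ k : ℕ, k ≤ d → ∃ c ∈ stageK P k, ∀ i : Fin d, i.val < k → c i ∣ t i := by
    intro k
    induction k with
    | zero =>
      intro _
      obtain ⟨b, hb⟩ := hPne
      exact ⟨b, hb, fun i hi => absurd hi (by omega)⟩
    | succ k ih =>
      intro hkd
      obtain ⟨c0, hc0, hc0d⟩ := ih (Nat.le_of_succ_le hkd)
      have hkd' : k < d := hkd
      obtain ⟨δ, hδval⟩ : ∃ δ : Fin d, δ.val = k := ⟨⟨k, hkd'⟩, rfl⟩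
      have hSne : ((stageK P k).filter (fun c => ∀ i : Fin d, i.val < k → c i ∣ t i)).Nonempty := ⟨c0, Finset.mem_filter.2 ⟨hc0, hc0d⟩⟩
      have hδeq : (⟨k, hkd'⟩ : Fin d) = δ := Fin.ext (by rw [hδval])
      have hstep : stageK P (k+1) = extF δ (stageK P k) := by
        show (if h : k < d then extF ⟨k, h⟩ (stageK P k) else stageK P k) = _
        rw [dif_pos hkd', hδeq]
      have hgdvd : ((stageK P k).filter (fun c => ∀ i : Fin d, i.val < k → c i ∣ t i)).gcd (fun c => c δ) ∣ t δ := by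
        by_contra hg
        obtain ⟨p, a, hp, ha, hpg, hpm⟩ := exists_pp_not_dvd (ht δ) hg
        have hZ'pos : ∀ b ∈ (P.filter (fun b => ¬ p^a ∣ b δ)), ∀ i, 0 < b i := fun b hb => hpos b (Finset.filter_subset _ _ hb)
        have hZ'nd : ∀ b ∈ (P.filter (fun b => ¬ p^a ∣ b δ)), ¬ p^a ∣ b δ := fun b hb => (Finset.mem_filter.1 hb).2
        have hfail : ∀ c ∈ stageK (P.filter (fun b => ¬ p^a ∣ b δ)) k, ∃ i : Fin d, i.val < k ∧ ¬ c i ∣ t i := by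
          intro c hc
          by_contra hno
          push_neg at hno
          have hcS : c ∈ ((stageK P k).filter (fun c => ∀ i : Fin d, i.val < k → c i ∣ t i)) :=
            Finset.mem_filter.2 ⟨stageK_mono (Finset.filter_subset _ _) k hc, hno⟩
          have h1 : p^a ∣ c δ := hpg.trans (Finset.gcd_dvd hcS)
          have h2 : ¬ p^a ∣ c δ :=
            stageK_pp_not_dvd hp ha hZ'pos hZ'nd k (le_of_eq hδval.symm) c hc
          exact h2 h1
        obtain ⟨n', hn'1, hn'2⟩ := lemmaN t ht k (Nat.le_of_succ_le hkd) (P.filter (fun b => ¬ p^a ∣ b δ)) hZ'pos hfail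
        have hhyp : ∀ b ∈ P, ∃ i, (fun i => if i.val < k then n' i else if i = δ then p^a else 0) i ∣ b i := by
          intro b hb
          by_cases hbq : p^a ∣ b δ
          · refine ⟨δ, ?_⟩
            have h1 : ¬ (δ.val < k) := by rw [hδval]; exact lt_irrefl k
            dsimp only
            rw [if_neg h1, if_pos rfl]
            exact hbq
          · have hbZ' : b ∈ (P.filter (fun b => ¬ p^a ∣ b δ)) := Finset.mem_filter.2 ⟨hb, hbq⟩
            have hbst : b ∈ stageK (P.filter (fun b => ¬ p^a ∣ b δ)) k := stageK_subset_of_le (P.filter (fun b => ¬ p^a ∣ b δ)) (Nat.zero_le k) hbZ'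
            obtain ⟨i, hik, hdvd⟩ := hn'2 b hbst
            exact ⟨i, by dsimp only; rw [if_pos hik]; exact hdvd⟩
        obtain ⟨i, hi⟩ := hstar _ hhyp
        by_cases hik : i.val < k
        · rw [if_pos hik] at hi
          exact hn'1 i hik hi
        · rw [if_neg hik] at hi
          by_cases hiδ : i = δ
          · rw [if_pos hiδ] at hi
            rw [hiδ] at hi
            exact hpm hi
          · rw [if_neg hiδ] at hi
            exact absurd (Nat.eq_zero_of_zero_dvd hi) (ht i).ne'
      refine ⟨combN δ ((stageK P k).filter (fun c => ∀ i : Fin d, i.val < k → c i ∣ t i)), ?_, ?_⟩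
      · rw [hstep, mem_extF]
        exact ⟨((stageK P k).filter (fun c => ∀ i : Fin d, i.val < k → c i ∣ t i)), Finset.filter_subset _ _, hSne, rfl⟩
      · intro i hik1
        by_cases hiδ : i = δ
        · subst hiδ
          rw [combN_apply_self]
          exact hgdvd
        · have hik : i.val < k := by
            have hne2 : i.val ≠ k := by
              intro hcon
              apply hiδ
              apply Fin.ext
              rw [hcon, hδval]
            exact Nat.lt_of_le_of_ne (Nat.lt_succ_iff.mp hik1) hne2
          rw [combN_apply_ne ((stageK P k).filter (fun c => ∀ i : Fin d, i.val < k → c i ∣ t i)) hiδ]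
          apply Finset.lcm_dvd
          intro c hc
          exact (Finset.mem_filter.1 hc).2 i hik
  obtain ⟨c, hc, hcd⟩ := key d le_rfl
  exact ⟨c, hc, fun i => hcd i i.isLt⟩

-- Fourier part
open MeasureTheory in
noncomputable def xiF (k : ℕ) : ℝ := if k = 0 then Real.sqrt 2 else 1 / k

lemma xiF_ne_zero (k : ℕ) : xiF k ≠ 0 := by
  unfold xiF
  split_ifs with h
  · intro h2
    have := Real.sqrt_eq_zero' (x := 2)
    rw [h2] at this
    simp at this
    linarith [this]
  · intro h2
    rw [div_eq_zero_iff] at h2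
    rcases h2 with h2 | h2
    · exact one_ne_zero h2
    · exact h (Nat.cast_eq_zero.1 h2)

noncomputable def cC (k : ℕ) : ℂ := 2 * Real.pi * Complex.I * (xiF k)

lemma cC_ne_zero (k : ℕ) : cC k ≠ 0 := by
  unfold cC
  apply mul_ne_zero
  apply mul_ne_zero
  apply mul_ne_zero
  · norm_num
  · exact_mod_cast Real.pi_ne_zero
  · exact Complex.I_ne_zero
  · exact_mod_cast xiF_ne_zero k

lemma two_pi_I_ne_zero : (2 * (Real.pi : ℂ) * Complex.I) ≠ 0 := by
  apply mul_ne_zero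
  apply mul_ne_zero
  · norm_num
  · exact_mod_cast Real.pi_ne_zero
  · exact Complex.I_ne_zero

lemma exp_cC_eq_one {k u : ℕ} (hd : k ∣ u) (hk : k ≠ 0) :
    Complex.exp (cC k * u) = 1 := by
  obtain ⟨q, rfl⟩ := hd
  have hk' : (k : ℂ) ≠ 0 := Nat.cast_ne_zero.mpr hk
  have harg : cC k * (k * q : ℕ) = (q : ℤ) * (2 * Real.pi * Complex.I) := by
    unfold cC xiF
    rw [if_neg hk]
    push_cast
    field_simp
  rw [harg]
  exact Complex.exp_int_mul_two_pi_mul_I q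

lemma exp_cC_dvd {k u : ℕ} (hu : 0 < u) (h : Complex.exp (cC k * u) = 1) : k ∣ u := by
  rw [Complex.exp_eq_one_iff] at h
  obtain ⟨z, hz⟩ := h
  have harg : cC k * u = (2 * (Real.pi : ℂ) * Complex.I) * ((xiF k * u : ℝ) : ℂ) := by
    unfold cC
    push_cast
    ring
  rw [harg] at hz
  have hz2 : ((xiF k * u : ℝ) : ℂ) = ((z : ℝ) : ℂ) := by
    have : (z : ℂ) * (2 * Real.pi * Complex.I) = (2 * (Real.pi : ℂ) * Complex.I) * ((z:ℝ):ℂ) := by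
      push_cast
      ring
    rw [this] at hz
    exact mul_left_cancel₀ two_pi_I_ne_zero hz
  have hzr : xiF k * u = (z : ℝ) := Complex.ofReal_inj.1 hz2
  by_cases hk : k = 0
  · exfalso
    subst hk
    unfold xiF at hzr
    rw [if_pos rfl] at hzr
    have hu' : (u : ℝ) ≠ 0 := Nat.cast_ne_zero.2 hu.ne'
    have hs2 : Real.sqrt 2 = (z : ℝ) / u := by
      field_simp at hzr ⊢
      linarith [hzr]
    apply irrational_sqrt_two
    rw [hs2]
    refine ⟨(z : ℚ) / (u : ℚ), ?_⟩
    push_cast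
    ring
  · unfold xiF at hzr
    rw [if_neg hk] at hzr
    have hk' : (k : ℝ) ≠ 0 := Nat.cast_ne_zero.2 hk
    have hu2 : (u : ℝ) = (z : ℝ) * k := by
      field_simp at hzr
      linarith [hzr]
    have hz0 : 0 ≤ z := by
      by_contra hneg
      push_neg at hneg
      have : (z : ℝ) * k ≤ 0 := by
        apply mul_nonpos_of_nonpos_of_nonneg
        · exact_mod_cast hneg.le
        · exact Nat.cast_nonneg k
      rw [← hu2] at this
      have : (0:ℝ) < u := by exact_mod_cast hu
      linarith
    refine ⟨z.toNat, ?_⟩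
    have : (u : ℝ) = ((k * z.toNat : ℕ) : ℝ) := by
      rw [hu2]
      push_cast
      rw [show ((z.toNat : ℕ) : ℝ) = ((z.toNat : ℤ) : ℝ) from by push_cast; ring,
        Int.toNat_of_nonneg hz0]
      ring
    exact_mod_cast this

open MeasureTheory in
lemma integral_ind1_exp (u : ℕ) (v : ℝ) {c : ℂ} (hc : c ≠ 0) :
    ∫ s : ℝ, ((ind1 u v s : ℤ) : ℂ) * Complex.exp (c * s)
      = (Complex.exp (c * (v + u)) - Complex.exp (c * v)) / c := by
  have hvu : v ≤ v + u := le_add_of_nonneg_right (Nat.cast_nonneg u)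
  have hident : (fun s : ℝ => ((ind1 u v s : ℤ) : ℂ) * Complex.exp (c * s))
      = Set.indicator (Set.Ico v (v + u)) (fun s : ℝ => Complex.exp (c * s)) := by
    funext s
    rw [Set.indicator_apply]
    unfold ind1
    by_cases h : v ≤ s ∧ s < v + u
    · rw [if_pos h, if_pos (Set.mem_Ico.2 h)]
      norm_num
    · rw [if_neg h, if_neg (fun hmem => h (Set.mem_Ico.1 hmem))]
      norm_num
  rw [hident, MeasureTheory.integral_indicator measurableSet_Ico,
    MeasureTheory.integral_Ico_eq_integral_Ioo, ← MeasureTheory.integral_Ioc_eq_integral_Ioo,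
    ← intervalIntegral.integral_of_le hvu, integral_exp_mul_complex hc]
  push_cast
  ring

open MeasureTheory in
lemma brick_integral {d : ℕ} (b : Fin d → ℕ) (v : Fin d → ℝ) (n : Fin d → ℕ) :
    ∫ y : Fin d → ℝ, ((brickInd b v y : ℤ) : ℂ) * ∏ i, Complex.exp (cC (n i) * y i)
      = ∏ i, (Complex.exp (cC (n i) * (v i + b i)) - Complex.exp (cC (n i) * v i)) / cC (n i) := by
  have h1 : (fun y : Fin d → ℝ => ((brickInd b v y : ℤ) : ℂ) * ∏ i, Complex.exp (cC (n i) * y i))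
      = fun y => ∏ i, (((ind1 (b i) (v i) (y i) : ℤ) : ℂ) * Complex.exp (cC (n i) * (y i))) := by
    funext y
    rw [brickInd_eq_prod]
    push_cast
    rw [Finset.prod_mul_distrib]
  rw [h1]
  rw [MeasureTheory.integral_fintype_prod_volume_eq_prod (ι := Fin d)
    (f := fun i s => ((ind1 (b i) (v i) s : ℤ) : ℂ) * Complex.exp (cC (n i) * s))]
  exact Finset.prod_congr rfl fun i _ => integral_ind1_exp (b i) (v i) (cC_ne_zero (n i))

lemma norm_exp_prod_one {d : ℕ} (n : Fin d → ℕ) (y : Fin d → ℝ) :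
    ‖∏ i, Complex.exp (cC (n i) * y i)‖ = 1 := by
  rw [norm_prod]
  rw [Finset.prod_eq_one]
  intro i _
  have harg : cC (n i) * y i = ((2 * Real.pi * xiF (n i) * y i : ℝ) : ℂ) * Complex.I := by
    unfold cC
    push_cast
    ring
  rw [harg]
  rw [Complex.norm_exp_ofReal_mul_I]

open MeasureTheory in
lemma brick_integrable {d : ℕ} (b : Fin d → ℕ) (v : Fin d → ℝ) (n : Fin d → ℕ) :
    Integrable (fun y : Fin d → ℝ => ((brickInd b v y : ℤ) : ℂ) * ∏ i, Complex.exp (cC (n i) * y i)) := by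
  have hbox : (fun y : Fin d → ℝ => ((brickInd b v y : ℤ) : ℂ) * ∏ i, Complex.exp (cC (n i) * y i))
      = Set.indicator (Set.univ.pi (fun i => Set.Ico (v i) (v i + b i)))
          (fun y => ∏ i, Complex.exp (cC (n i) * y i)) := by
    funext y
    rw [Set.indicator_apply]
    unfold brickInd
    by_cases h : ∀ i, v i ≤ y i ∧ y i < v i + b i
    · rw [if_pos h, if_pos (by rw [Set.mem_univ_pi]; exact fun i => Set.mem_Ico.2 (h i))]
      norm_num
    · rw [if_neg h, if_neg (by rw [Set.mem_univ_pi]; intro hmem; exact h (fun i => Set.mem_Ico.1 (hmem i)))]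
      norm_num
  rw [hbox]
  have hmeas : MeasurableSet (Set.univ.pi (fun i : Fin d => Set.Ico (v i) (v i + b i))) :=
    MeasurableSet.univ_pi (fun i => measurableSet_Ico)
  apply MeasureTheory.IntegrableOn.integrable_indicator _ hmeas
  have hcont : Continuous (fun y : Fin d → ℝ => ∏ i, Complex.exp (cC (n i) * y i)) := by
    apply continuous_finset_prod
    intro i _
    exact Complex.continuous_exp.comp
      (continuous_const.mul (Complex.continuous_ofReal.comp (continuous_apply i)))
  apply MeasureTheory.Measure.integrableOn_of_bounded (M := 1)
  · rw [MeasureTheory.volume_pi_pi]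
    apply ne_of_lt
    apply ENNReal.prod_lt_top
    intro i _
    rw [Real.volume_Ico]
    exact ENNReal.ofReal_lt_top
  · exact hcont.aestronglyMeasurable
  · apply Filter.Eventually.of_forall
    intro y
    rw [norm_exp_prod_one]

open MeasureTheory in
lemma tilable_star {d : ℕ} (P : Set (Fin d → ℕ)) (hP : ∀ b ∈ P, ∀ i, 0 < b i)
    (t : Fin d → ℕ) (ht : ∀ i, 0 < t i) (htil : Tilable P t)
    (n : Fin d → ℕ) (hn : ∀ b ∈ P, ∃ i, n i ∣ b i) : ∃ i, n i ∣ t i := by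
  obtain ⟨m, p, w, γ, hpP, hid⟩ := htil
  have hR0 : ∀ j : Fin m,
      (∫ y : Fin d → ℝ, ((brickInd (p j) (w j) y : ℤ) : ℂ) * ∏ i, Complex.exp (cC (n i) * y i)) = 0 := by
    intro j
    rw [brick_integral]
    obtain ⟨i0, hi0⟩ := hn (p j) (hpP j)
    apply Finset.prod_eq_zero (Finset.mem_univ i0)
    have hk0 : n i0 ≠ 0 := by
      intro h0
      rw [h0] at hi0
      exact absurd (Nat.eq_zero_of_zero_dvd hi0) (hP (p j) (hpP j) i0).ne'
    have hexp : Complex.exp (cC (n i0) * ((p j) i0 : ℕ)) = 1 := exp_cC_eq_one hi0 hk0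
    rw [mul_add, Complex.exp_add, hexp, mul_one, sub_self, zero_div]
  have hLR : (∫ y : Fin d → ℝ, ((brickInd t (fun _ => 0) y : ℤ) : ℂ) * ∏ i, Complex.exp (cC (n i) * y i)) = 0 := by
    have hfun : (fun y : Fin d → ℝ => ((brickInd t (fun _ => 0) y : ℤ) : ℂ) * ∏ i, Complex.exp (cC (n i) * y i))
        = fun y => ∑ j : Fin m, (γ j : ℂ) *
            (((brickInd (p j) (w j) y : ℤ) : ℂ) * ∏ i, Complex.exp (cC (n i) * y i)) := by
      funext y
      rw [hid y]
      push_cast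
      rw [Finset.sum_mul]
      apply Finset.sum_congr rfl
      intro j _
      ring
    rw [hfun]
    rw [MeasureTheory.integral_finset_sum _
      (fun j _ => (brick_integrable (p j) (w j) n).const_mul ((γ j : ℂ)))]
    apply Finset.sum_eq_zero
    intro j _
    rw [MeasureTheory.integral_const_mul, hR0 j, mul_zero]
  rw [brick_integral t (fun _ => 0) n] at hLR
  obtain ⟨i0, _, hfac⟩ := Finset.prod_eq_zero_iff.1 hLR
  rw [div_eq_zero_iff] at hfac
  rcases hfac with hfac | hfac
  · rw [sub_eq_zero] at hfac
    have hexp1 : Complex.exp (cC (n i0) * (t i0 : ℕ)) = 1 := by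
      have h00 : cC (n i0) * ((0 : ℝ) + (t i0 : ℕ)) = cC (n i0) * (t i0 : ℕ) := by
        norm_num
      have h01 : cC (n i0) * ((0:ℝ) : ℂ) = 0 := by norm_num
      rw [h00, h01, Complex.exp_zero] at hfac
      exact hfac
    exact ⟨i0, exp_cC_dvd (ht i0) hexp1⟩
  · exact absurd hfac (cC_ne_zero (n i0))

-- Phi machinery
def nsig {d : ℕ} (P : Finset (Fin d → ℕ)) (σ : ↥P → Fin d) (i : Fin d) : ℕ :=
  (Finset.univ.filter (fun b : ↥P => σ b = i)).gcd (fun b => (b : ↥P).1 i)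

def ePhi {d : ℕ} (P : Finset (Fin d → ℕ)) (Φ : (↥P → Fin d) → Fin d) (i : Fin d) : ℕ :=
  (Finset.univ.filter (fun σ : ↥P → Fin d => Φ σ = i)).lcm (fun σ => nsig P σ i)

def GoodPhi {d : ℕ} (P : Finset (Fin d → ℕ)) (Φ : (↥P → Fin d) → Fin d) : Prop :=
  ∀ σ : ↥P → Fin d, ∃ b : ↥P, σ b = Φ σ

lemma phi_exists {d : ℕ} (P : Finset (Fin d → ℕ)) (t : Fin d → ℕ) (ht : ∀ i, 0 < t i)
    (hstar : ∀ n : Fin d → ℕ, (∀ b ∈ P, ∃ i, n i ∣ b i) → ∃ i, n i ∣ t i) :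
    ∃ Φ : (↥P → Fin d) → Fin d, GoodPhi P Φ ∧ ∀ i, ePhi P Φ i ∣ t i := by
  have hσ : ∀ σ : ↥P → Fin d, ∃ i, nsig P σ i ∣ t i := by
    intro σ
    apply hstar
    intro b hb
    refine ⟨σ ⟨b, hb⟩, ?_⟩
    unfold nsig
    have : nsig P σ (σ ⟨b, hb⟩) ∣ (⟨b, hb⟩ : ↥P).1 (σ ⟨b, hb⟩) := by
      apply Finset.gcd_dvd
      simp only [Finset.mem_filter, Finset.mem_univ, true_and]
    exact this
  choose Φ hΦ using hσ
  refine ⟨Φ, ?_, ?_⟩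
  · intro σ
    by_contra hno
    push_neg at hno
    have hempty : (Finset.univ.filter (fun b : ↥P => σ b = Φ σ)) = ∅ := by
      rw [Finset.filter_eq_empty_iff]
      exact fun b _ => hno b
    have h0 : nsig P σ (Φ σ) = 0 := by
      unfold nsig
      rw [hempty, Finset.gcd_empty]
    have := hΦ σ
    rw [h0] at this
    exact absurd (Nat.eq_zero_of_zero_dvd this) (ht (Φ σ)).ne'
  · intro i
    unfold ePhi
    apply Finset.lcm_dvd
    intro σ hσi
    have heq : Φ σ = i := (Finset.mem_filter.1 hσi).2
    rw [← heq]
    exact hΦ σ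

lemma ePhi_pos {d : ℕ} (P : Finset (Fin d → ℕ)) (Φ : (↥P → Fin d) → Fin d)
    (hG : GoodPhi P Φ) (hpos : ∀ b ∈ P, ∀ i, 0 < b i) : ∀ i, 0 < ePhi P Φ i := by
  intro i
  rcases Nat.eq_zero_or_pos (ePhi P Φ i) with h0 | h
  · exfalso
    unfold ePhi at h0
    rw [Finset.lcm_eq_zero_iff] at h0
    obtain ⟨σ, hσmem, hσ0⟩ := h0
    have hΦσ : Φ σ = i := (Finset.mem_filter.1 hσmem).2
    unfold nsig at hσ0
    rw [Finset.gcd_eq_zero_iff] at hσ0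
    obtain ⟨b, hb⟩ := hG σ
    have hbmem : b ∈ Finset.univ.filter (fun b : ↥P => σ b = i) := by
      rw [Finset.mem_filter]
      exact ⟨Finset.mem_univ b, by rw [hb, hΦσ]⟩
    have := hσ0 b hbmem
    exact absurd this (hpos b.1 b.2 i).ne'
  · exact h

lemma ePhi_star {d : ℕ} (P : Finset (Fin d → ℕ)) (Φ : (↥P → Fin d) → Fin d)
    (hG : GoodPhi P Φ) :
    ∀ n : Fin d → ℕ, (∀ b ∈ P, ∃ i, n i ∣ b i) → ∃ i, n i ∣ ePhi P Φ i := by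
  intro n hn
  have hch : ∀ b : ↥P, ∃ i, n i ∣ b.1 i := fun b => hn b.1 b.2
  choose σ hσ using hch
  refine ⟨Φ σ, ?_⟩
  have h1 : n (Φ σ) ∣ nsig P σ (Φ σ) := by
    apply Finset.dvd_gcd
    intro b hb
    have hbσ : σ b = Φ σ := (Finset.mem_filter.1 hb).2
    have := hσ b
    rw [hbσ] at this
    exact this
  have h2 : nsig P σ (Φ σ) ∣ ePhi P Φ (Φ σ) := by
    apply Finset.dvd_lcm
    rw [Finset.mem_filter]
    exact ⟨Finset.mem_univ σ, rfl⟩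
  exact h1.trans h2

/-- Improved rank bound: for every `d ≥ 1` and every nonempty finite set
`P` of `d`-dimensional bricks with `card P = r`, `rank(P) ≤ d^(d^r)`. -/
theorem statement14 {d : ℕ} (hd : 1 ≤ d) (P : Finset (Fin d → ℕ))
    (hne : P.Nonempty) (r : ℕ) (hcard : P.card = r)
    (hpos : ∀ b ∈ P, ∀ i, 0 < b i) :
    brickRank (↑P : Set (Fin d → ℕ)) ≤ d ^ (d ^ r) := by
  classical
  have hFex : ∀ Φ : (↥P → Fin d) → Fin d, GoodPhi P Φ →
      ∃ c, c ∈ stageK P d ∧ ∀ i, c i ∣ ePhi P Φ i := by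
    intro Φ hG
    obtain ⟨c, hc1, hc2⟩ := main_comb P hne hpos (ePhi P Φ) (ePhi_pos P Φ hG hpos)
      (ePhi_star P Φ hG)
    exact ⟨c, hc1, hc2⟩
  choose F hF1 hF2 using hFex
  have hsub : MSet (↑P : Set (Fin d → ℕ)) ⊆ Set.range (fun Φ : ((↥P → Fin d) → Fin d) =>
      if h : GoodPhi P Φ then F Φ h else fun _ => 0) := by
    intro t htM
    have htM' : ((∀ i, 0 < t i) ∧ Tilable (↑P : Set (Fin d → ℕ)) t) ∧
        ∀ s, ((∀ i, 0 < s i) ∧ Tilable (↑P : Set (Fin d → ℕ)) s) → BrickLE s t → s = t := by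
      obtain ⟨h1, h2⟩ := htM
      exact ⟨h1, fun s hs => h2 s hs⟩
    obtain ⟨⟨htpos, httil⟩, hmin⟩ := htM'
    have hstar : ∀ n : Fin d → ℕ, (∀ b ∈ P, ∃ i, n i ∣ b i) → ∃ i, n i ∣ t i := by
      intro n hn
      exact tilable_star (↑P) (fun b hb => hpos b hb) t htpos httil n (fun b hb => hn b hb)
    obtain ⟨Φ, hG, hdvd⟩ := phi_exists P t htpos hstar
    have hcst := stageK_good (↑P : Set (Fin d → ℕ)) P
      (fun b hb => ⟨hpos b hb, tilable_mem (by exact hb)⟩) d (F Φ hG) (hF1 Φ hG)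
    have hFle : BrickLE (F Φ hG) t := fun i => (hF2 Φ hG i).trans (hdvd i)
    have hteq : F Φ hG = t := hmin (F Φ hG) ⟨hcst.1, hcst.2⟩ hFle
    refine ⟨Φ, ?_⟩
    show (if h : GoodPhi P Φ then F Φ h else fun _ => 0) = t
    rw [dif_pos hG, hteq]
  have hle1 : brickRank (↑P : Set (Fin d → ℕ)) ≤ (Set.range (fun Φ : ((↥P → Fin d) → Fin d) =>
      if h : GoodPhi P Φ then F Φ h else fun _ => 0)).ncard :=
    Set.ncard_le_ncard hsub (Set.finite_range _)
  have hle2 : (Set.range (fun Φ : ((↥P → Fin d) → Fin d) =>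
      if h : GoodPhi P Φ then F Φ h else fun _ => 0)).ncard
      ≤ Fintype.card ((↥P → Fin d) → Fin d) := by
    rw [← Set.image_univ]
    calc ((fun Φ : ((↥P → Fin d) → Fin d) =>
          if h : GoodPhi P Φ then F Φ h else fun _ => 0) '' Set.univ).ncard
        ≤ (Set.univ : Set ((↥P → Fin d) → Fin d)).ncard :=
          Set.ncard_image_le Set.finite_univ
      _ = Fintype.card ((↥P → Fin d) → Fin d) := by
          rw [Set.ncard_univ, Nat.card_eq_fintype_card]
  have hcardeq : Fintype.card ((↥P → Fin d) → Fin d) = d ^ (d ^ r) := by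
    rw [Fintype.card_fun, Fintype.card_fun, Fintype.card_fin, Fintype.card_coe, hcard]
  calc brickRank (↑P : Set (Fin d → ℕ)) ≤ _ := hle1
    _ ≤ Fintype.card ((↥P → Fin d) → Fin d) := hle2
    _ = d ^ (d ^ r) := hcardeq
end
end

section
/- (Commutativity of extension operators.) For every dimension d ≥ 1, all directions i, j ∈ Fin d, and every finite set P of d-dimensional bricks, Ext_i(Ext_j(P)) = Ext_j(Ext_i(P)). -/
open scoped Classical

noncomputable section

/-- gcd distributes over lcm in ℕ. -/
lemma nat_gcd_lcm_distrib (a b c : ℕ) :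
    Nat.gcd a (Nat.lcm b c) = Nat.lcm (Nat.gcd a b) (Nat.gcd a c) := by
  rcases eq_or_ne a 0 with rfl | ha
  · simp [Nat.gcd_zero_left]
  rcases eq_or_ne b 0 with rfl | hb
  · simp only [Nat.lcm_zero_left, Nat.gcd_zero_right]
    exact (Nat.dvd_antisymm (Nat.lcm_dvd dvd_rfl (Nat.gcd_dvd_left a c))
      (Nat.dvd_lcm_left _ _)).symm
  rcases eq_or_ne c 0 with rfl | hc
  · simp only [Nat.lcm_zero_right, Nat.gcd_zero_right]
    exact (Nat.dvd_antisymm (Nat.lcm_dvd (Nat.gcd_dvd_left a b) dvd_rfl)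
      (Nat.dvd_lcm_right _ _)).symm
  have hgb : Nat.gcd a b ≠ 0 := fun h => ha (Nat.eq_zero_of_gcd_eq_zero_left h)
  have hgc : Nat.gcd a c ≠ 0 := fun h => ha (Nat.eq_zero_of_gcd_eq_zero_left h)
  have hlbc : Nat.lcm b c ≠ 0 := Nat.lcm_ne_zero hb hc
  apply Nat.eq_of_factorization_eq
  · exact fun h => ha (Nat.eq_zero_of_gcd_eq_zero_left h)
  · exact Nat.lcm_ne_zero hgb hgc
  intro p
  rw [Nat.factorization_gcd ha hlbc, Nat.factorization_lcm hgb hgc,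
    Nat.factorization_gcd ha hb, Nat.factorization_gcd ha hc, Nat.factorization_lcm hb hc]
  simp only [Finsupp.inf_apply, Finsupp.sup_apply]
  omega

/-- Type synonym for ℕ equipped with the divisibility lattice structure. -/
def NatDvd : Type := ℕ

namespace NatDvd

def toND : ℕ → NatDvd := id
def ofND : NatDvd → ℕ := id

instance : PartialOrder NatDvd where
  le a b := ofND a ∣ ofND b
  le_refl a := dvd_refl _
  le_trans _ _ _ := dvd_trans
  le_antisymm _ _ := Nat.dvd_antisymm

instance : Lattice NatDvd where
  inf a b := toND (Nat.gcd (ofND a) (ofND b))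
  sup a b := toND (Nat.lcm (ofND a) (ofND b))
  inf_le_left a b := Nat.gcd_dvd_left _ _
  inf_le_right a b := Nat.gcd_dvd_right _ _
  le_inf _ _ _ h1 h2 := Nat.dvd_gcd h1 h2
  le_sup_left a b := Nat.dvd_lcm_left _ _
  le_sup_right a b := Nat.dvd_lcm_right _ _
  sup_le _ _ _ h1 h2 := Nat.lcm_dvd h1 h2

instance : DistribLattice NatDvd :=
  DistribLattice.ofInfSupLe fun a b c =>
    le_of_eq (α := NatDvd) (nat_gcd_lcm_distrib (ofND a) (ofND b) (ofND c))

instance : BoundedOrder NatDvd where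
  top := toND 0
  bot := toND 1
  le_top a := Dvd.intro 0 rfl
  bot_le a := one_dvd _

lemma sup_eq_lcm {ι : Type*} (s : Finset ι) (f : ι → ℕ) :
    s.sup (fun i => toND (f i)) = toND (s.lcm f) := by
  induction s using Finset.induction_on with
  | empty => rfl
  | insert _ _ ha ih => rw [Finset.sup_insert, Finset.lcm_insert, ih]; rfl

lemma inf_eq_gcd {ι : Type*} (s : Finset ι) (f : ι → ℕ) :
    s.inf (fun i => toND (f i)) = toND (s.gcd f) := by
  induction s using Finset.induction_on with
  | empty => rfl
  | insert _ _ ha ih => rw [Finset.inf_insert, Finset.gcd_insert, ih]; rfl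

end NatDvd

section KeyLemmas

variable {ι β : Type*} [DecidableEq ι]

lemma gcd_lcm_pi (s : Finset ι) (t : ι → Finset β) (f : ι → β → ℕ) :
    (s.gcd fun i => (t i).lcm (f i)) =
      (s.pi fun i => t i).lcm fun g => s.attach.gcd fun x => f x.1 (g x.1 x.2) := by
  have h := Finset.inf_sup (α := NatDvd) s (fun i => t i) (fun i b => NatDvd.toND (f i b))
  simp only [NatDvd.sup_eq_lcm, NatDvd.inf_eq_gcd] at h
  exact h

lemma lcm_gcd_pi (s : Finset ι) (t : ι → Finset β) (f : ι → β → ℕ) :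
    (s.lcm fun i => (t i).gcd (f i)) =
      (s.pi fun i => t i).gcd fun g => s.attach.lcm fun x => f x.1 (g x.1 x.2) := by
  have h := Finset.sup_inf (α := NatDvd) s (fun i => t i) (fun i b => NatDvd.toND (f i b))
  simp only [NatDvd.sup_eq_lcm, NatDvd.inf_eq_gcd] at h
  exact h

lemma lcm_lcm_pi (s : Finset ι) (t : ι → Finset β) (f : ι → β → ℕ)
    (ht : ∀ i ∈ s, (t i).Nonempty) :
    (s.lcm fun i => (t i).lcm (f i)) =
      (s.pi fun i => t i).lcm fun g => s.attach.lcm fun x => f x.1 (g x.1 x.2) := by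
  apply Nat.dvd_antisymm
  · refine Finset.lcm_dvd fun i hi => Finset.lcm_dvd fun b hb => ?_
    set g : ∀ a ∈ s, β := fun a ha => if a = i then b else (ht a ha).choose with hgdef
    have hgmem : g ∈ s.pi fun i => t i := by
      refine Finset.mem_pi.mpr fun a ha => ?_
      by_cases h : a = i
      · subst h; simpa [hgdef] using hb
      · simpa [hgdef, h] using (ht a ha).choose_spec
    have h1 : f i b ∣ s.attach.lcm fun x => f x.1 (g x.1 x.2) := by
      have := Finset.dvd_lcm (f := fun x : {x // x ∈ s} => f x.1 (g x.1 x.2))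
        (Finset.mem_attach s ⟨i, hi⟩)
      simpa [hgdef] using this
    exact h1.trans (Finset.dvd_lcm hgmem)
  · refine Finset.lcm_dvd fun g hg => Finset.lcm_dvd fun x _ => ?_
    exact dvd_trans (Finset.dvd_lcm (Finset.mem_pi.mp hg x.1 x.2)) (Finset.dvd_lcm x.2)

end KeyLemmas

lemma extN_comm_subset {d : ℕ} (i j : Fin d) (hij : i ≠ j) (Q : Set (Fin d → ℕ)) :
    ExtN i (ExtN j Q) ⊆ ExtN j (ExtN i Q) := by
  rintro b ⟨B, hBne, hBsub, rfl⟩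
  have hch : ∀ x : Fin d → ℕ, ∃ A : Finset (Fin d → ℕ),
      x ∈ B → (A.Nonempty ∧ ↑A ⊆ Q ∧ x = combN j A) := by
    intro x
    by_cases hx : x ∈ B
    · obtain ⟨A, h1, h2, h3⟩ := hBsub hx
      exact ⟨A, fun _ => ⟨h1, h2, h3⟩⟩
    · exact ⟨∅, fun h => absurd h hx⟩
  choose F hF using hch
  have hFne : ∀ x ∈ B, (F x).Nonempty := fun x hx => (hF x hx).1
  have hFsub : ∀ x ∈ B, ↑(F x) ⊆ Q := fun x hx => (hF x hx).2.1
  have hFeq : ∀ x ∈ B, x = combN j (F x) := fun x hx => (hF x hx).2.2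
  set C := B.pi fun x => F x with hC
  set φ : (∀ a ∈ B, (Fin d → ℕ)) → (Fin d → ℕ) :=
    fun c => combN i (B.attach.image fun x => c x.1 x.2) with hφ
  have hCne : C.Nonempty :=
    ⟨fun a ha => (hFne a ha).choose, Finset.mem_pi.mpr fun a ha => (hFne a ha).choose_spec⟩
  refine ⟨C.image φ, hCne.image φ, ?_, ?_⟩
  · intro y hy
    obtain ⟨c, hc, rfl⟩ := Finset.mem_image.mp (Finset.mem_coe.mp hy)
    refine ⟨B.attach.image fun x => c x.1 x.2, (hBne.attach).image _, ?_, rfl⟩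
    intro z hz
    obtain ⟨x, hx, rfl⟩ := Finset.mem_image.mp (Finset.mem_coe.mp hz)
    exact hFsub x.1 x.2 (Finset.mem_pi.mp hc x.1 x.2)
  · funext k
    show (if k = i then B.gcd fun b => b i else B.lcm fun b => b k) =
      if k = j then (C.image φ).gcd fun b => b j else (C.image φ).lcm fun b => b k
    by_cases hki : k = i
    · subst hki
      rw [if_pos rfl, if_neg hij]
      have e1 : (B.gcd fun b => b k) = B.gcd fun b => (F b).lcm fun a => a k := by
        refine Finset.gcd_congr rfl fun b hb => ?_
        conv_lhs => rw [hFeq b hb]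
        simp only [combN, if_neg hij]
      rw [e1, gcd_lcm_pi, Finset.lcm_image, ← hC]
      refine Finset.lcm_congr rfl fun c hc => ?_
      simp [hφ, combN, hij, Finset.gcd_image, Function.comp_def]
    · by_cases hkj : k = j
      · subst hkj
        rw [if_neg hki, if_pos rfl]
        have e1 : (B.lcm fun b => b k) = B.lcm fun b => (F b).gcd fun a => a k := by
          refine Finset.lcm_congr rfl fun b hb => ?_
          conv_lhs => rw [hFeq b hb]
          simp [combN]
        rw [e1, lcm_gcd_pi, Finset.gcd_image, ← hC]
        refine Finset.gcd_congr rfl fun c hc => ?_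
        simp [hφ, combN, hki, Finset.lcm_image, Function.comp_def]
      · rw [if_neg hki, if_neg hkj]
        have e1 : (B.lcm fun b => b k) = B.lcm fun b => (F b).lcm fun a => a k := by
          refine Finset.lcm_congr rfl fun b hb => ?_
          conv_lhs => rw [hFeq b hb]
          simp only [combN, if_neg hkj]
        rw [e1, lcm_lcm_pi _ _ _ hFne, Finset.lcm_image, ← hC]
        refine Finset.lcm_congr rfl fun c hc => ?_
        simp [hφ, combN, hki, Finset.lcm_image, Function.comp_def]



/-- Commutativity of extension operators: for every dimension `d ≥ 1`,
all directions `i, j`, and every finite set `P` of `d`-dimensional bricks,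
`Ext_i(Ext_j(P)) = Ext_j(Ext_i(P))`. -/
theorem statement15 {d : ℕ} (hd : 1 ≤ d) (i j : Fin d) (P : Finset (Fin d → ℕ))
    (hpos : ∀ b ∈ P, ∀ k, 0 < b k) :
    ExtN i (ExtN j (↑P : Set (Fin d → ℕ))) = ExtN j (ExtN i (↑P : Set (Fin d → ℕ))) := by
  rcases eq_or_ne i j with rfl | hij
  · rfl
  · exact subset_antisymm (extN_comm_subset i j hij _) (extN_comm_subset j i hij.symm _)
end
end
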